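/- arXiv:1806.05965 — 4 statements merged into one kernel-verified Lean document; each statement's English description precedes it below -/
import Mathlib

section
/- Let Π be a measure on (0,∞) with ∫ min(1,x) Π(dx) < ∞ whose tail ov(x) := Π((x,∞)) is regularly varying at ∞ with index -α for some α ∈ (0,1) (or, more generally, has lower Matuszewska index β(ov) > -1). Then there exists a constant C > 0, depending only on Π, such that for every t > 0, A > 1, B > 0, and H ∈ (0,1): P(X_t^{(0,A)} > B) ≤ exp(C t log(1/H) H^{-A/B} ov(A) A / B) · H, where X^{(0,A)} denotes a subordinator with zero drift and Lévy measure Π restricted to (0,A). -/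
open MeasureTheory ProbabilityTheory Filter Real Set
open scoped ENNReal

noncomputable section

namespace ConstrainedLocalTime

variable {Ω : Type*} [MeasurableSpace Ω]

/-- The tail `ov(x) = Π((x,∞))` of a Lévy measure, as a real number. -/
def tail (Pi : Measure ℝ) (x : ℝ) : ℝ := (Pi (Set.Ioi x)).toReal

/-- The event that the process `X` stays (weakly) above the boundary `b` on `[0,u]`. -/
def OEv (X : ℝ → Ω → ℝ) (b : ℝ → ℝ) (u : ℝ) : Set Ω :=
  {ω | ∀ s, 0 ≤ s → s ≤ u → b s ≤ X s ω}

/-- The shifted boundary `g_y^h(t) = g(t+h) - y`. -/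
def gyh (g : ℝ → ℝ) (y h : ℝ) : ℝ → ℝ := fun t => g (t + h) - y

/-- `Φ(t) = ∫_0^t P(O_u) du` for the boundary `b`. -/
def Phi (P : Measure Ω) (X : ℝ → Ω → ℝ) (b : ℝ → ℝ) (t : ℝ) : ℝ :=
  ∫ u in Set.Ioc (0:ℝ) t, (P (OEv X b u)).toReal

/-- `Φ(∞) = ∫_0^∞ P(O_u) du` for the boundary `b`, as an extended real. -/
def PhiInf (P : Measure Ω) (X : ℝ → Ω → ℝ) (b : ℝ → ℝ) : ℝ≥0∞ :=
  ∫⁻ u in Set.Ioi (0:ℝ), P (OEv X b u)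

/-- `X` is a subordinator with Lévy measure `Pi` and zero drift, under the
probability measure `P`. -/
structure IsSubordinator (P : Measure Ω) (X : ℝ → Ω → ℝ) (Pi : Measure ℝ) : Prop where
  isProb : IsProbabilityMeasure P
  meas : ∀ t, Measurable (X t)
  levySupport : Pi (Set.Iic 0) = 0
  levyIntegrable : ∫⁻ x, ENNReal.ofReal (min 1 x) ∂Pi ≠ ⊤
  startZero : ∀ᵐ ω ∂P, X 0 ω = 0
  monoPaths : ∀ᵐ ω ∂P, MonotoneOn (fun t => X t ω) (Set.Ici 0)
  rightCont : ∀ᵐ ω ∂P, ∀ t, 0 ≤ t → ContinuousWithinAt (fun s => X s ω) (Set.Ici t) t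
  indepIncrements : ∀ (n : ℕ) (t : Fin (n + 1) → ℝ), Monotone t → (∀ i, 0 ≤ t i) →
    iIndepFun
      (fun i : Fin n => fun ω => X (t i.succ) ω - X (t i.castSucc) ω) P
  statIncrements : ∀ s t : ℝ, 0 ≤ s → 0 ≤ t →
    Measure.map (fun ω => X (t + s) ω - X s ω) P = Measure.map (X t) P
  laplace : ∀ l t : ℝ, 0 ≤ l → 0 ≤ t →
    ∫ ω, Real.exp (-(l * X t ω)) ∂P
      = Real.exp (-(t * ∫ x, (1 - Real.exp (-(l * x))) ∂Pi))

/-- Case (i) of the paper. -/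
structure CaseI (P : Measure Ω) (X : ℝ → Ω → ℝ) (Pi : Measure ℝ)
    (f g : ℝ → ℝ) (α : ℝ) (L : ℝ → ℝ) (B N : ℝ) : Prop where
  sub : IsSubordinator P X Pi
  alpha_mem : α ∈ Set.Ioo (0:ℝ) 1
  tail_eq : ∀ x > (0:ℝ), tail Pi x = x ^ (-α) * L x
  L_slowly : ∀ lam > (0:ℝ), Tendsto (fun t => L (lam * t) / L t) atTop (nhds 1)
  B_pos : 0 < B
  N_pos : 0 < N
  xNL_mono : MonotoneOn (fun x => x ^ N * L x) (Set.Ioi B)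
  f_zero : f 0 ∈ Set.Ioo (0:ℝ) 1
  f_mono : StrictMonoOn f (Set.Ici 0)
  f_cont : ContinuousOn f (Set.Ici 0)
  f_diff : ∀ t > (0:ℝ), DifferentiableAt ℝ f t
  f_tendsto : Tendsto f atTop atTop
  tfov_anti : AntitoneOn (fun t => t * deriv f t * tail Pi t) (Set.Ioi 0)
  tfov_zero : Tendsto (fun t => t * deriv f t * tail Pi t) atTop (nhds 0)
  g_inv : ∀ x ≥ (0:ℝ), g (f x) = x
  f_inv : ∀ y, f 0 ≤ y → f (g y) = y
  g_zero : ∀ x, 0 ≤ x → x < f 0 → g x = 0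
  g_ratio : ∀ ε > (0:ℝ), Tendsto (fun t => g (t + ε) / g t) atTop (nhds 1)
  cond_beta : ∃ β > (1 + 2*α) / (2*α + α^2),
    Tendsto (fun t => t * tail Pi (g t / Real.log t ^ β)) atTop (nhds 0)

/-- Case (ii) of the paper. -/
structure CaseII (P : Measure Ω) (X : ℝ → Ω → ℝ) (Pi : Measure ℝ)
    (f g : ℝ → ℝ) : Prop where
  sub : IsSubordinator P X Pi
  tail_crv : ∀ ε > (0:ℝ), ∃ δ > (0:ℝ), ∀ lam : ℝ, |lam - 1| < δ → 0 < lam →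
    ∀ᶠ t in atTop, |tail Pi (lam * t) / tail Pi t - 1| < ε
  matuszewska : ∃ b > (-1:ℝ), ∃ C > (0:ℝ), ∀ Lam > (1:ℝ), ∀ ε ∈ Set.Ioo (0:ℝ) 1,
    ∀ᶠ x in atTop, ∀ lam ∈ Set.Icc (1:ℝ) Lam,
      (1 - ε) * C * lam ^ b ≤ tail Pi (lam * x) / tail Pi x
  f_zero : f 0 ∈ Set.Ioo (0:ℝ) 1
  f_mono : StrictMonoOn f (Set.Ici 0)
  f_cont : ContinuousOn f (Set.Ici 0)
  f_tendsto : Tendsto f atTop atTop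
  g_inv : ∀ x ≥ (0:ℝ), g (f x) = x
  f_inv : ∀ y, f 0 ≤ y → f (g y) = y
  g_zero : ∀ x, 0 ≤ x → x < f 0 → g x = 0
  cond_eps : ∃ ε > (0:ℝ), Tendsto (fun t => t ^ (1+ε) * tail Pi (g t)) atTop (nhds 0)

/-- Case (ia) of the paper: case (i) together with O-regular variation of `f` and `f'`,
existence of densities `ft` (of `X_t`) and `u` (of the Lévy measure), and the
uniform domination `f_t(x) ≤ A₀ t u(x)` for `x ≥ g(t) + x₀`. -/
structure CaseIa (P : Measure Ω) (X : ℝ → Ω → ℝ) (Pi : Measure ℝ)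
    (f g : ℝ → ℝ) (α : ℝ) (L : ℝ → ℝ) (B N : ℝ) (ft : ℝ → ℝ → ℝ) (u : ℝ → ℝ)
    extends CaseI P X Pi f g α L B N : Prop where
  f_orv : ∀ lam > (0:ℝ), ∃ c > (0:ℝ), ∃ C : ℝ,
    ∀ᶠ t in atTop, c ≤ f (lam * t) / f t ∧ f (lam * t) / f t ≤ C
  f'_orv : ∀ lam > (0:ℝ), ∃ c > (0:ℝ), ∃ C : ℝ,
    ∀ᶠ t in atTop, c ≤ deriv f (lam * t) / deriv f t ∧ deriv f (lam * t) / deriv f t ≤ C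
  density_X : ∀ t > (0:ℝ), Measure.map (X t) P
      = volume.withDensity (fun x => ENNReal.ofReal (ft t x))
  density_levy : Pi = volume.withDensity (fun x => ENNReal.ofReal (u x))
  domination : ∃ A₀ > (0:ℝ), ∃ x₀ > (0:ℝ), ∀ t > (0:ℝ), ∀ x, g t + x₀ ≤ x →
    ft t x ≤ A₀ * t * u x



section TailLemmas

variable {Pi : Measure ℝ}

lemma tail_nonneg (x : ℝ) : 0 ≤ tail Pi x := ENNReal.toReal_nonneg

lemma tail_measure_ne_top (hint : ∫⁻ x, ENNReal.ofReal (min 1 x) ∂Pi ≠ ⊤)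
    {x : ℝ} (hx : 0 < x) : Pi (Set.Ioi x) ≠ ⊤ := by
  have h1 : ENNReal.ofReal (min 1 x) * Pi (Set.Ioi x)
      ≤ ∫⁻ y, ENNReal.ofReal (min 1 y) ∂Pi := by
    calc ENNReal.ofReal (min 1 x) * Pi (Set.Ioi x)
        = ∫⁻ _ in Set.Ioi x, ENNReal.ofReal (min 1 x) ∂Pi := by
          rw [MeasureTheory.setLIntegral_const]
      _ ≤ ∫⁻ y in Set.Ioi x, ENNReal.ofReal (min 1 y) ∂Pi := by
          refine setLIntegral_mono (by fun_prop) (fun y hy => ?_)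
          exact ENNReal.ofReal_le_ofReal (min_le_min le_rfl (le_of_lt hy))
      _ ≤ ∫⁻ y, ENNReal.ofReal (min 1 y) ∂Pi := setLIntegral_le_lintegral _ _
  intro htop
  rw [htop, ENNReal.mul_top] at h1
  · exact hint (top_le_iff.mp h1)
  · simp [ENNReal.ofReal_eq_zero, not_le, lt_min_iff, hx]


lemma tail_anti (hint : ∫⁻ x, ENNReal.ofReal (min 1 x) ∂Pi ≠ ⊤)
    {x y : ℝ} (hx : 0 < x) (hxy : x ≤ y) : tail Pi y ≤ tail Pi x :=
  ENNReal.toReal_mono (tail_measure_ne_top hint hx)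
    (measure_mono (Set.Ioi_subset_Ioi hxy))

lemma ofReal_tail (hint : ∫⁻ x, ENNReal.ofReal (min 1 x) ∂Pi ≠ ⊤)
    {x : ℝ} (hx : 0 < x) : ENNReal.ofReal (tail Pi x) = Pi (Set.Ioi x) :=
  ENNReal.ofReal_toReal (tail_measure_ne_top hint hx)


/-- The per-step chain estimate extracted from either regular variation or the
Matuszewska-index hypothesis. -/
lemma chain_exists
    (htail : (∃ α ∈ Set.Ioo (0:ℝ) 1, ∀ lam > (0:ℝ),
        Tendsto (fun x => tail Pi (lam * x) / tail Pi x) atTop (nhds (lam ^ (-α))))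
      ∨ (∃ b > (-1:ℝ), ∃ C₀ > (0:ℝ), ∀ Lam > (1:ℝ), ∀ ε ∈ Set.Ioo (0:ℝ) 1,
        ∀ᶠ x in atTop, ∀ lam ∈ Set.Icc (1:ℝ) Lam,
          (1 - ε) * C₀ * lam ^ b ≤ tail Pi (lam * x) / tail Pi x)) :
    ∃ Lam θ x₀ : ℝ, 1 < Lam ∧ 1/Lam < θ ∧ θ ≤ 1 ∧ 1 ≤ x₀ ∧
      (∀ x, x₀ ≤ x → 0 < tail Pi x) ∧
      (∀ x, x₀ ≤ x → θ * tail Pi x ≤ tail Pi (Lam * x)) := by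
  rcases htail with ⟨α, hα, hrv⟩ | ⟨b, hb, C₀, hC₀, hmat⟩
  · -- regularly varying case, Λ = 2
    have h2α : (1:ℝ)/2 < (2:ℝ) ^ (-α) := by
      rw [show (1:ℝ)/2 = (2:ℝ) ^ (-1:ℝ) by
        rw [Real.rpow_neg_one]; norm_num]
      exact Real.rpow_lt_rpow_left_iff (by norm_num) |>.mpr (by linarith [hα.2])
    have h2α1 : (2:ℝ) ^ (-α) ≤ 1 := by
      rw [show (1:ℝ) = (2:ℝ) ^ (0:ℝ) by simp]
      exact Real.rpow_le_rpow_left_iff (by norm_num) |>.mpr (by linarith [hα.1])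
    set θ := ((2:ℝ) ^ (-α) + 1/2) / 2 with hθdef
    have hθlt : θ < (2:ℝ) ^ (-α) := by rw [hθdef]; linarith
    have hθgt : 1/2 < θ := by rw [hθdef]; linarith
    have hθ1 : θ ≤ 1 := by rw [hθdef]; linarith
    have hev2 : ∀ᶠ x in atTop, θ < tail Pi (2 * x) / tail Pi x :=
      (hrv 2 (by norm_num)).eventually_const_lt hθlt
    have hev1 : ∀ᶠ x in atTop, (1:ℝ)/2 < tail Pi (1 * x) / tail Pi x := by
      have := (hrv 1 (by norm_num)).eventually_const_lt
        (show (1:ℝ)/2 < (1:ℝ)^(-α) by rw [Real.one_rpow]; norm_num)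
      exact this
    obtain ⟨x₀, hx₀⟩ := ((hev2.and hev1).and (eventually_ge_atTop (1:ℝ))).exists_forall_of_atTop
    refine ⟨2, θ, x₀, by norm_num, hθgt, hθ1, (hx₀ x₀ le_rfl).2, ?_, ?_⟩
    · intro x hx
      have h1 := ((hx₀ x hx).1).2
      rw [one_mul] at h1
      rcases eq_or_lt_of_le (tail_nonneg (Pi := Pi) x) with h | h
      · rw [← h, div_zero] at h1; norm_num at h1
      · exact h
    · intro x hx
      have h2 := ((hx₀ x hx).1).1
      have hpos : 0 < tail Pi x := by
        have h1 := ((hx₀ x hx).1).2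
        rw [one_mul] at h1
        rcases eq_or_lt_of_le (tail_nonneg (Pi := Pi) x) with h | h
        · rw [← h, div_zero] at h1; norm_num at h1
        · exact h
      rw [lt_div_iff₀ hpos] at h2
      linarith
  · -- Matuszewska case
    have hb1 : (0:ℝ) < b + 1 := by linarith
    -- choose Λ large with (1/2) * C₀ * Λ ^ (b+1) > 1 and Λ ≥ 2
    obtain ⟨Λ, hΛ⟩ : ∃ Λ : ℝ, 2 ≤ Λ ∧ 2/C₀ < Λ ^ (b+1) := by
      have := tendsto_rpow_atTop hb1
      obtain ⟨Λ, hΛ⟩ := ((this.eventually_gt_atTop (2/C₀)).and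
        (eventually_ge_atTop (2:ℝ))).exists
      exact ⟨Λ, hΛ.2, hΛ.1⟩
    have hΛ1 : (1:ℝ) < Λ := by linarith [hΛ.1]
    have hΛ0 : (0:ℝ) < Λ := by linarith
    set θ := min 1 (1/2 * C₀ * Λ ^ b) with hθdef
    have hstep : (1:ℝ)/Λ < 1/2 * C₀ * Λ ^ b := by
      have hΛb : Λ ^ (b+1) = Λ ^ b * Λ := by
        rw [Real.rpow_add hΛ0, Real.rpow_one]
      rw [div_lt_iff₀ hΛ0]
      have h2C : 2/C₀ < Λ ^ b * Λ := by rw [← hΛb]; exact hΛ.2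
      rw [div_lt_iff₀ hC₀] at h2C
      nlinarith
    have hθgt : 1/Λ < θ := by
      rw [hθdef]; refine lt_min ?_ hstep
      rw [div_lt_one hΛ0]; exact hΛ1
    obtain ⟨x₀, hx₀⟩ := ((hmat Λ hΛ1 (1/2) (by norm_num)).and
      (eventually_ge_atTop (1:ℝ))).exists_forall_of_atTop
    refine ⟨Λ, θ, x₀, hΛ1, hθgt, min_le_left _ _, (hx₀ x₀ le_rfl).2, ?_, ?_⟩
    · intro x hx
      have h1 := (hx₀ x hx).1 1 ⟨le_rfl, le_of_lt hΛ1⟩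
      rw [one_mul, Real.one_rpow, mul_one] at h1
      rcases eq_or_lt_of_le (tail_nonneg (Pi := Pi) x) with h | h
      · rw [← h, div_zero] at h1; nlinarith
      · exact h
    · intro x hx
      have h2 := (hx₀ x hx).1 Λ ⟨le_of_lt hΛ1, le_rfl⟩
      have hpos : 0 < tail Pi x := by
        have h1 := (hx₀ x hx).1 1 ⟨le_rfl, le_of_lt hΛ1⟩
        rw [one_mul, Real.one_rpow, mul_one] at h1
        rcases eq_or_lt_of_le (tail_nonneg (Pi := Pi) x) with h | h
        · rw [← h, div_zero] at h1; nlinarith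
        · exact h
      rw [le_div_iff₀ hpos] at h2
      calc θ * tail Pi x ≤ 1/2 * C₀ * Λ ^ b * tail Pi x := by
            refine mul_le_mul_of_nonneg_right (min_le_right _ _) (tail_nonneg _)
        _ = (1 - 1/2) * C₀ * Λ ^ b * tail Pi x := by norm_num
        _ ≤ tail Pi (Λ * x) := h2


section chaincons

variable (hint : ∫⁻ x, ENNReal.ofReal (min 1 x) ∂Pi ≠ ⊤)
  {Λ θ x₀ : ℝ} (hΛ : 1 < Λ) (hθΛ : 1/Λ < θ) (hθ1 : θ ≤ 1) (hx₀ : 1 ≤ x₀)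
  (hpos : ∀ x, x₀ ≤ x → 0 < tail Pi x)
  (hstep : ∀ x, x₀ ≤ x → θ * tail Pi x ≤ tail Pi (Λ * x))

include hint hΛ hθΛ hθ1 hx₀ hpos hstep

lemma lower_aux : ∀ n : ℕ, ∀ A : ℝ, x₀ ≤ A → A ≤ Λ^n * x₀ →
    θ * (x₀ * tail Pi x₀) ≤ A * tail Pi A := by
  have hθ0 : 0 < θ := lt_trans (by positivity) hθΛ
  have hx₀0 : (0:ℝ) < x₀ := by linarith
  intro n
  induction n with
  | zero =>
    intro A hA1 hA2
    rw [pow_zero, one_mul] at hA2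
    have : A = x₀ := le_antisymm hA2 hA1
    subst this
    nlinarith [mul_nonneg (sub_nonneg.mpr hθ1) (mul_nonneg (le_of_lt hx₀0) (le_of_lt (hpos A le_rfl)))]
  | succ n ih =>
    intro A hA1 hA2
    by_cases hcase : A ≤ Λ * x₀
    · have h1 : tail Pi (Λ * x₀) ≤ tail Pi A :=
        tail_anti hint (by linarith) hcase
      have h2 := hstep x₀ le_rfl
      have h3 := hpos A hA1
      nlinarith [tail_nonneg (Pi := Pi) x₀]
    · push_neg at hcase
      have hΛ0 : (0:ℝ) < Λ := by linarith
      have hA'1 : x₀ ≤ A / Λ := by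
        rw [le_div_iff₀ hΛ0]; linarith [mul_comm x₀ Λ]
      have hA'2 : A / Λ ≤ Λ^n * x₀ := by
        rw [div_le_iff₀ hΛ0, pow_succ] at *
        nlinarith [pow_pos hΛ0 n]
      have hIH := ih (A/Λ) hA'1 hA'2
      have h2 := hstep (A/Λ) hA'1
      rw [mul_div_cancel₀ _ (ne_of_gt hΛ0)] at h2
      have hΛθ : 1 ≤ Λ * θ := by
        rw [div_lt_iff₀ hΛ0] at hθΛ; linarith [mul_comm θ Λ]
      have hA0 : 0 < A := by linarith
      have h4 : 0 < tail Pi (A/Λ) := hpos _ hA'1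
      calc θ * (x₀ * tail Pi x₀) ≤ (A/Λ) * tail Pi (A/Λ) := hIH
        _ ≤ (Λ * θ) * ((A/Λ) * tail Pi (A/Λ)) := by
              nlinarith [mul_nonneg (sub_nonneg.mpr hΛθ) (le_of_lt (mul_pos (div_pos hA0 hΛ0) h4))]
        _ = A * (θ * tail Pi (A/Λ)) := by field_simp
        _ ≤ A * tail Pi A := by nlinarith

lemma tail_lower : ∀ A : ℝ, x₀ ≤ A → θ * (x₀ * tail Pi x₀) ≤ A * tail Pi A := by
  intro A hA
  have hx₀0 : (0:ℝ) < x₀ := by linarith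
  obtain ⟨n, hn⟩ := pow_unbounded_of_one_lt (A / x₀) hΛ
  refine lower_aux hint hΛ hθΛ hθ1 hx₀ hpos hstep n A hA ?_
  rw [div_lt_iff₀ hx₀0] at hn
  linarith

/-- key integral bound by induction -/
lemma J_aux : ∀ n : ℕ, ∀ A : ℝ, x₀ ≤ A → A ≤ Λ^n * x₀ →
    ∫⁻ x in Set.Ioc x₀ A, ENNReal.ofReal x ∂Pi
      ≤ ENNReal.ofReal ((1/(θ - 1/Λ)) * (A * tail Pi A)) := by
  have hθ0 : 0 < θ := lt_trans (by positivity) hθΛ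
  have hx₀0 : (0:ℝ) < x₀ := by linarith
  have hΛ0 : (0:ℝ) < Λ := by linarith
  have hd0 : 0 < θ - 1/Λ := by linarith
  set c : ℝ := 1/(θ - 1/Λ) with hc
  have hc0 : 0 < c := by positivity
  have hcθ : 1 ≤ c * θ := by
    rw [hc]; rw [div_mul_eq_mul_div, le_div_iff₀ hd0]; nlinarith [div_pos one_pos hΛ0]
  intro n
  induction n with
  | zero =>
    intro A hA1 hA2
    rw [pow_zero, one_mul] at hA2
    have : A = x₀ := le_antisymm hA2 hA1
    subst this
    simp [Set.Ioc_self]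
  | succ n ih =>
    intro A hA1 hA2
    have hA0 : 0 < A := by linarith
    -- first, generic bound for a slab (a, A] with x₀ ≤ a:
    have slab : ∀ a : ℝ, x₀ ≤ a →
        ∫⁻ x in Set.Ioc a A, ENNReal.ofReal x ∂Pi ≤ ENNReal.ofReal (A * tail Pi a) := by
      intro a ha
      have ha0 : 0 < a := by linarith
      calc ∫⁻ x in Set.Ioc a A, ENNReal.ofReal x ∂Pi
          ≤ ∫⁻ _ in Set.Ioc a A, ENNReal.ofReal A ∂Pi := by
            refine setLIntegral_mono (by fun_prop) (fun y hy => ?_)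
            exact ENNReal.ofReal_le_ofReal hy.2
        _ = ENNReal.ofReal A * Pi (Set.Ioc a A) := by rw [MeasureTheory.setLIntegral_const]
        _ ≤ ENNReal.ofReal A * Pi (Set.Ioi a) := by
            exact mul_le_mul_right (measure_mono Set.Ioc_subset_Ioi_self) _
        _ = ENNReal.ofReal A * ENNReal.ofReal (tail Pi a) := by rw [ofReal_tail hint ha0]
        _ = ENNReal.ofReal (A * tail Pi a) := by
            rw [ENNReal.ofReal_mul (le_of_lt hA0)]
    by_cases hcase : A ≤ Λ * x₀
    · have h2 := hstep x₀ le_rfl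
      have h1 : tail Pi (Λ * x₀) ≤ tail Pi A := tail_anti hint (by linarith) hcase
      have : tail Pi x₀ ≤ c * tail Pi A := by
        have : θ * tail Pi x₀ ≤ tail Pi A := le_trans h2 h1
        nlinarith [tail_nonneg (Pi := Pi) x₀]
      refine le_trans (slab x₀ le_rfl) (ENNReal.ofReal_le_ofReal ?_)
      nlinarith [tail_nonneg (Pi := Pi) x₀]
    · push_neg at hcase
      have hA'1 : x₀ ≤ A / Λ := by rw [le_div_iff₀ hΛ0]; linarith [mul_comm x₀ Λ]
      have hA'2 : A / Λ ≤ Λ^n * x₀ := by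
        rw [div_le_iff₀ hΛ0, pow_succ] at *
        nlinarith [pow_pos hΛ0 n]
      have hsplit : Set.Ioc x₀ A = Set.Ioc x₀ (A/Λ) ∪ Set.Ioc (A/Λ) A := by
        rw [Set.Ioc_union_Ioc_eq_Ioc hA'1]
        exact le_trans (div_le_iff₀ hΛ0 |>.mpr (by nlinarith)) le_rfl
      have hstepA := hstep (A/Λ) hA'1
      rw [mul_div_cancel₀ _ (ne_of_gt hΛ0)] at hstepA
      have htA' : tail Pi (A/Λ) ≤ tail Pi A / θ := by
        rw [le_div_iff₀ hθ0]; linarith [mul_comm (tail Pi (A/Λ)) θ]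
      have h4 : 0 ≤ tail Pi (A/Λ) := tail_nonneg _
      have h5 : 0 ≤ tail Pi A := tail_nonneg _
      calc ∫⁻ x in Set.Ioc x₀ A, ENNReal.ofReal x ∂Pi
          ≤ (∫⁻ x in Set.Ioc x₀ (A/Λ), ENNReal.ofReal x ∂Pi)
            + ∫⁻ x in Set.Ioc (A/Λ) A, ENNReal.ofReal x ∂Pi := by
            rw [hsplit]
            exact lintegral_union_le _ _ _
        _ ≤ ENNReal.ofReal (c * ((A/Λ) * tail Pi (A/Λ)))
            + ENNReal.ofReal (A * tail Pi (A/Λ)) := by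
            exact add_le_add (ih (A/Λ) hA'1 hA'2) (slab (A/Λ) hA'1)
        _ = ENNReal.ofReal (c * ((A/Λ) * tail Pi (A/Λ)) + A * tail Pi (A/Λ)) := by
            rw [ENNReal.ofReal_add] <;> positivity
        _ ≤ ENNReal.ofReal (c * (A * tail Pi A)) := by
            refine ENNReal.ofReal_le_ofReal ?_
            have key : c * (1/Λ) + 1 ≤ c * θ := by
              rw [hc]; rw [div_mul_eq_mul_div, div_mul_eq_mul_div, div_add' _ _ _ (ne_of_gt hd0),
                div_le_div_iff₀ hd0 hd0]
              ring_nf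
              nlinarith
            have e1 : c * ((A/Λ) * tail Pi (A/Λ)) + A * tail Pi (A/Λ)
                = (c * (1/Λ) + 1) * (A * tail Pi (A/Λ)) := by field_simp
            rw [e1]
            have e2 : (c * (1/Λ) + 1) * (A * tail Pi (A/Λ)) ≤ (c*θ) * (A * tail Pi (A/Λ)) := by
              nlinarith [mul_nonneg (sub_nonneg.mpr key) (mul_nonneg hA0.le h4)]
            refine le_trans e2 ?_
            have e3 : θ * tail Pi (A/Λ) ≤ tail Pi A := hstepA
            nlinarith [mul_le_mul_of_nonneg_left e3 (mul_nonneg hc0.le hA0.le)]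
  
end chaincons


lemma lintegral_x_lt_top (hint : ∫⁻ x, ENNReal.ofReal (min 1 x) ∂Pi ≠ ⊤)
    {A : ℝ} (hA : 1 ≤ A) : ∫⁻ x in Set.Ioo 0 A, ENNReal.ofReal x ∂Pi ≠ ⊤ := by
  have : ∫⁻ x in Set.Ioo 0 A, ENNReal.ofReal x ∂Pi
      ≤ ENNReal.ofReal A * ∫⁻ x, ENNReal.ofReal (min 1 x) ∂Pi := by
    calc ∫⁻ x in Set.Ioo 0 A, ENNReal.ofReal x ∂Pi
        ≤ ∫⁻ x in Set.Ioo 0 A, ENNReal.ofReal A * ENNReal.ofReal (min 1 x) ∂Pi := by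
          refine setLIntegral_mono (by fun_prop) (fun y hy => ?_)
          rw [← ENNReal.ofReal_mul (by linarith)]
          refine ENNReal.ofReal_le_ofReal ?_
          rcases le_total y 1 with h | h
          · rw [min_eq_right h]; nlinarith [hy.1]
          · rw [min_eq_left h]; rw [mul_one]; exact le_of_lt hy.2
      _ = ENNReal.ofReal A * ∫⁻ x in Set.Ioo 0 A, ENNReal.ofReal (min 1 x) ∂Pi := by
          rw [lintegral_const_mul _ (by fun_prop)]
      _ ≤ ENNReal.ofReal A * ∫⁻ x, ENNReal.ofReal (min 1 x) ∂Pi := by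
          exact mul_le_mul_right (setLIntegral_le_lintegral _ _) _
  intro htop
  rw [htop, top_le_iff] at this
  exact (ENNReal.mul_lt_top ENNReal.ofReal_lt_top (hint.lt_top)).ne this

/-- Main analytic estimate: the truncated first moment is controlled by `A * tail A`. -/
lemma moment_bound (hint : ∫⁻ x, ENNReal.ofReal (min 1 x) ∂Pi ≠ ⊤)
    (htail : (∃ α ∈ Set.Ioo (0:ℝ) 1, ∀ lam > (0:ℝ),
        Tendsto (fun x => tail Pi (lam * x) / tail Pi x) atTop (nhds (lam ^ (-α))))
      ∨ (∃ b > (-1:ℝ), ∃ C₀ > (0:ℝ), ∀ Lam > (1:ℝ), ∀ ε ∈ Set.Ioo (0:ℝ) 1,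
        ∀ᶠ x in atTop, ∀ lam ∈ Set.Icc (1:ℝ) Lam,
          (1 - ε) * C₀ * lam ^ b ≤ tail Pi (lam * x) / tail Pi x)) :
    ∃ C₁ > (0:ℝ), ∀ A : ℝ, 1 < A →
      (∫⁻ x in Set.Ioo 0 A, ENNReal.ofReal x ∂Pi).toReal ≤ C₁ * (A * tail Pi A) := by
  obtain ⟨Λ, θ, x₀, hΛ, hθΛ, hθ1, hx₀, hpos, hstep⟩ := chain_exists htail
  have hθ0 : 0 < θ := lt_trans (by positivity) hθΛ
  have hx₀0 : (0:ℝ) < x₀ := by linarith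
  have hΛ0 : (0:ℝ) < Λ := by linarith
  set c₅ : ℝ := θ * (x₀ * tail Pi x₀) with hc₅
  have hc₅0 : 0 < c₅ := by
    have := hpos x₀ le_rfl
    positivity
  set c₇ : ℝ := 1/(θ - 1/Λ) with hc₇
  have hc₇0 : 0 < c₇ := by
    have : 0 < θ - 1/Λ := by linarith
    positivity
  have hIoc_fin : ∫⁻ x in Set.Ioc 0 x₀, ENNReal.ofReal x ∂Pi ≠ ⊤ := by
    refine ne_top_of_le_ne_top (lintegral_x_lt_top hint (by linarith : (1:ℝ) ≤ x₀ + 1)) ?_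
    exact lintegral_mono_set (fun y hy => ⟨hy.1, lt_of_le_of_lt hy.2 (by linarith)⟩)
  set c₈ : ℝ := (∫⁻ x in Set.Ioc 0 x₀, ENNReal.ofReal x ∂Pi).toReal with hc₈
  have hc₈0 : 0 ≤ c₈ := ENNReal.toReal_nonneg
  set c₉ : ℝ := min c₅ (tail Pi x₀) with hc₉
  have hc₉0 : 0 < c₉ := lt_min hc₅0 (hpos x₀ le_rfl)
  refine ⟨c₈/c₉ + c₇ + 1, by positivity, ?_⟩
  intro A hA
  have hA0 : (0:ℝ) < A := by linarith
  have hAt0 : 0 ≤ A * tail Pi A := mul_nonneg hA0.le (tail_nonneg _)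
  have hlow : c₉ ≤ A * tail Pi A := by
    rcases le_total A x₀ with h | h
    · have h1 : tail Pi x₀ ≤ tail Pi A := tail_anti hint hA0 h
      refine le_trans (min_le_right _ _) ?_
      nlinarith [tail_nonneg (Pi := Pi) x₀]
    · exact le_trans (min_le_left _ _)
        (tail_lower hint hΛ hθΛ hθ1 hx₀ hpos hstep A h)
  have hc₈le : c₈ ≤ (c₈/c₉) * (A * tail Pi A) := by
    rw [div_mul_eq_mul_div, le_div_iff₀ hc₉0]
    exact mul_le_mul_of_nonneg_left hlow hc₈0
  rcases le_total A x₀ with h | h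
  · have hM : (∫⁻ x in Set.Ioo 0 A, ENNReal.ofReal x ∂Pi).toReal ≤ c₈ := by
      refine ENNReal.toReal_mono hIoc_fin ?_
      exact lintegral_mono_set (fun y hy => ⟨hy.1, le_trans hy.2.le h⟩)
    calc (∫⁻ x in Set.Ioo 0 A, ENNReal.ofReal x ∂Pi).toReal ≤ c₈ := hM
      _ ≤ (c₈/c₉) * (A * tail Pi A) := hc₈le
      _ ≤ (c₈/c₉ + c₇ + 1) * (A * tail Pi A) := by nlinarith
  · obtain ⟨n, hn⟩ := pow_unbounded_of_one_lt (A / x₀) hΛ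
    have hAn : A ≤ Λ^n * x₀ := by
      rw [div_lt_iff₀ hx₀0] at hn; linarith
    have hJ := J_aux hint hΛ hθΛ hθ1 hx₀ hpos hstep n A h hAn
    have hsub : Set.Ioo (0:ℝ) A ⊆ Set.Ioc 0 x₀ ∪ Set.Ioc x₀ A := by
      intro y hy
      rcases le_or_gt y x₀ with h' | h'
      · exact Or.inl ⟨hy.1, h'⟩
      · exact Or.inr ⟨h', hy.2.le⟩
    have hbound : ∫⁻ x in Set.Ioo 0 A, ENNReal.ofReal x ∂Pi
        ≤ ENNReal.ofReal (c₈ + c₇ * (A * tail Pi A)) := by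
      calc ∫⁻ x in Set.Ioo 0 A, ENNReal.ofReal x ∂Pi
          ≤ ∫⁻ x in Set.Ioc 0 x₀ ∪ Set.Ioc x₀ A, ENNReal.ofReal x ∂Pi :=
            lintegral_mono_set hsub
        _ ≤ (∫⁻ x in Set.Ioc 0 x₀, ENNReal.ofReal x ∂Pi)
            + ∫⁻ x in Set.Ioc x₀ A, ENNReal.ofReal x ∂Pi := lintegral_union_le _ _ _
        _ ≤ ENNReal.ofReal c₈ + ENNReal.ofReal (c₇ * (A * tail Pi A)) := by
            refine add_le_add ?_ hJ
            rw [hc₈, ENNReal.ofReal_toReal hIoc_fin]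
        _ = ENNReal.ofReal (c₈ + c₇ * (A * tail Pi A)) := by
            rw [ENNReal.ofReal_add hc₈0 (by positivity)]
    refine le_trans (ENNReal.toReal_le_of_le_ofReal (by positivity) hbound) ?_
    nlinarith



end TailLemmas

lemma alg_identity {n : ℕ} (hn : 1 ≤ n) (z : ℝ) :
    (1-z)^n = ∑ k ∈ Finset.range (n+1), (n.choose k : ℝ) * (-1)^(k+1) * (1 - z^k) := by
  have h1 : ∑ k ∈ Finset.range (n+1), (n.choose k : ℝ) * (-1)^k = 0 := by
    have := add_pow (-1 : ℝ) 1 n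
    simp only [one_pow, mul_one] at this
    rw [neg_add_cancel, zero_pow (by omega)] at this
    rw [this]
    refine Finset.sum_congr rfl (fun k hk => by ring)

  have h2 : ∑ k ∈ Finset.range (n+1), (n.choose k : ℝ) * (-1)^k * z^k = (1-z)^n := by
    have := add_pow (-z : ℝ) 1 n
    simp only [one_pow, mul_one] at this
    rw [show -z + 1 = 1 - z by ring] at this
    rw [this]
    refine Finset.sum_congr rfl (fun k hk => by rw [neg_pow]; ring)
  calc (1-z)^n = -(∑ k ∈ Finset.range (n+1), (n.choose k : ℝ) * (-1)^k)
      + ∑ k ∈ Finset.range (n+1), (n.choose k : ℝ) * (-1)^k * z^k := by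
        rw [h1, h2]; ring
    _ = ∑ k ∈ Finset.range (n+1), (n.choose k : ℝ) * (-1)^(k+1) * (1 - z^k) := by
        rw [neg_eq_neg_one_mul, Finset.mul_sum, ← Finset.sum_add_distrib]
        refine Finset.sum_congr rfl (fun k hk => by ring)

lemma exp_sq_bound {u : ℝ} (hu : 0 ≤ u) : Real.exp (-u) ≤ 1 - u + u^2/2 := by
  set f : ℝ → ℝ := fun u => 1 - u + u^2/2 - Real.exp (-u) with hf
  have hder : ∀ x : ℝ, HasDerivAt f (-1 + x + Real.exp (-x)) x := by
    intro x
    have h1 : HasDerivAt (fun u : ℝ => 1 - u + u^2/2) (-1 + x) x := by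
      have : HasDerivAt (fun u : ℝ => 1 - u + u^2/2) (0 - 1 + (2 * x^1)/2) x := by
        exact (((hasDerivAt_const x (1:ℝ)).sub (hasDerivAt_id x)).add
          (((hasDerivAt_pow 2 x)).div_const 2))
      simpa using this
    have h2 : HasDerivAt (fun u : ℝ => Real.exp (-u)) (Real.exp (-x) * (-1)) x := by
      exact (Real.hasDerivAt_exp (-x)).comp x ((hasDerivAt_id x).neg)
    have := h1.sub h2
    exact this.congr_deriv (by ring)
  have hmono : Monotone f := by
    refine monotone_of_deriv_nonneg (fun x => (hder x).differentiableAt) (fun x => ?_)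
    rw [(hder x).deriv]
    nlinarith [Real.add_one_le_exp (-x)]
  have h0 : f 0 = 0 := by simp [hf]
  have := hmono hu
  rw [h0] at this
  simp only [hf] at this
  linarith

lemma one_sub_exp_le {u : ℝ} : 1 - Real.exp (-u) ≤ u := by
  nlinarith [Real.add_one_le_exp (-u)]

lemma abs_one_sub_exp_sub {u : ℝ} (hu : 0 ≤ u) : |(1 - Real.exp (-u)) - u| ≤ u^2/2 := by
  rw [abs_le]
  constructor
  · nlinarith [exp_sq_bound hu]
  · nlinarith [one_sub_exp_le (u := u)]


/-- expectation of a product of independent, a.e.-bounded random variables -/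
lemma indep_integral_prod {P : Measure Ω} [IsProbabilityMeasure P] {m : ℕ}
    {Y : Fin m → Ω → ℝ}
    (hY : iIndepFun Y P) (hmeas : ∀ i, Measurable (Y i)) :
    ∀ S : Finset (Fin m), ∫ ω, ∏ i ∈ S, Y i ω ∂P = ∏ i ∈ S, ∫ ω, Y i ω ∂P := by
  intro S
  induction S using Finset.induction_on with
  | empty => simp
  | @insert a S ha ih =>
    have hIndep : IndepFun (∏ j ∈ S, Y j) (Y a) P :=
      iIndepFun.indepFun_finset_prod_of_notMem hY hmeas ha
    have h1 : ∫ ω, ∏ i ∈ insert a S, Y i ω ∂P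
        = ∫ ω, (∏ i ∈ S, Y i ω) * Y a ω ∂P := by
      refine integral_congr_ae (ae_of_all _ (fun ω => ?_))
      simp only [Finset.prod_insert ha]
      ring
    have hms : AEStronglyMeasurable (∏ j ∈ S, Y j) P := by
      rw [Finset.prod_fn]
      exact (Finset.measurable_prod S (fun i _ => hmeas i)).aestronglyMeasurable
    have h2 := hIndep.integral_mul_eq_mul_integral hms ((hmeas a).aestronglyMeasurable)
    have h3 : integral P ((∏ j ∈ S, Y j) * Y a) = ∫ ω, (∏ i ∈ S, Y i ω) * Y a ω ∂P := by
      refine integral_congr_ae (ae_of_all _ (fun ω => ?_))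
      simp [Finset.prod_apply]
    have h4 : integral P (∏ j ∈ S, Y j) = ∫ ω, ∏ i ∈ S, Y i ω ∂P := by
      refine integral_congr_ae (ae_of_all _ (fun ω => ?_))
      simp [Finset.prod_apply]
    rw [h1, ← h3, h2, h4, Finset.prod_insert ha, ih]
    ring


/-- The Laplace exponent. -/
def lexp (nu : Measure ℝ) (l : ℝ) : ℝ := ∫ x, (1 - Real.exp (-(l * x))) ∂nu

section basic

variable {P : Measure Ω} {X : ℝ → Ω → ℝ} {nu : Measure ℝ}
  (sub : IsSubordinator P X nu)

include sub

lemma X_nonneg {t : ℝ} (ht : 0 ≤ t) : ∀ᵐ ω ∂P, 0 ≤ X t ω := by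
  filter_upwards [sub.startZero, sub.monoPaths] with ω h0 hm
  have := hm (Set.self_mem_Ici) ht ht
  simp only at this
  rwa [h0] at this

lemma integrable_comp_bdd {t : ℝ} (ht : 0 ≤ t) {f : ℝ → ℝ} (hf : Measurable f)
    {c : ℝ} (hc : ∀ x, 0 ≤ x → |f x| ≤ c) :
    Integrable (fun ω => f (X t ω)) P := by
  haveI := sub.isProb
  refine (integrable_const c).mono'
    ((hf.comp (sub.meas t)).aestronglyMeasurable) ?_
  filter_upwards [X_nonneg sub ht] with ω h0
  exact hc _ h0

lemma laplace_eq {l t : ℝ} (hl : 0 ≤ l) (ht : 0 ≤ t) :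
    ∫ ω, Real.exp (-(l * X t ω)) ∂P = Real.exp (-(t * lexp nu l)) :=
  sub.laplace l t hl ht

lemma one_sub_exp_expectation {l t : ℝ} (hl : 0 ≤ l) (ht : 0 ≤ t) :
    ∫ ω, (1 - Real.exp (-(l * X t ω))) ∂P = 1 - Real.exp (-(t * lexp nu l)) := by
  haveI := sub.isProb
  have hmeas : Measurable (fun x : ℝ => Real.exp (-(l * x))) := by fun_prop
  have hInt : Integrable (fun ω => Real.exp (-(l * X t ω))) P :=
    integrable_comp_bdd sub ht hmeas (c := 1) (fun x hx => by
      rw [abs_of_nonneg (Real.exp_nonneg _)]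
      exact Real.exp_le_one_iff.mpr (by nlinarith))
  rw [integral_sub (integrable_const 1) hInt, integral_const, laplace_eq sub hl ht]
  simp

end basic

section nu

variable {nu : Measure ℝ} {A : ℝ}

/-- integrability of `1 - e^{-lx}` against the truncated Lévy measure -/
lemma integrable_one_sub_exp (hA : 0 < A)
    (hsupp : ∀ᵐ x ∂nu, x ∈ Set.Ioo 0 A)
    (hint : ∫⁻ x, ENNReal.ofReal (min 1 x) ∂nu ≠ ⊤)
    {l : ℝ} (hl : 0 ≤ l) :
    Integrable (fun x => 1 - Real.exp (-(l * x))) nu := by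
  have hmin : Integrable (fun x => min 1 x) nu := by
    refine ⟨((measurable_const.min measurable_id).aestronglyMeasurable), ?_⟩
    rw [hasFiniteIntegral_iff_norm]
    have : ∫⁻ x, ENNReal.ofReal ‖min 1 x‖ ∂nu = ∫⁻ x, ENNReal.ofReal (min 1 x) ∂nu := by
      refine lintegral_congr_ae ?_
      filter_upwards [hsupp] with x hx
      rw [Real.norm_eq_abs, abs_of_nonneg (le_min one_pos.le hx.1.le)]
    rw [this]
    exact hint.lt_top
  refine ((hmin.const_mul (1 + l)).mono'
    ((measurable_const.sub (Measurable.exp (by fun_prop))).aestronglyMeasurable) ?_)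
  filter_upwards [hsupp] with x hx
  have h1 : 0 ≤ 1 - Real.exp (-(l * x)) := by
    have : Real.exp (-(l * x)) ≤ 1 := Real.exp_le_one_iff.mpr (by nlinarith [hx.1])
    linarith
  have h2 : 1 - Real.exp (-(l * x)) ≤ min 1 (l * x) := by
    refine le_min (by nlinarith [Real.exp_nonneg (-(l*x))]) ?_
    nlinarith [Real.add_one_le_exp (-(l*x))]
  rw [Real.norm_eq_abs, abs_of_nonneg h1]
  rcases le_total x 1 with h | h
  · have : min 1 x = x := min_eq_right h
    rw [this]
    refine le_trans (le_trans h2 (min_le_right _ _)) ?_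
    nlinarith [hx.1]
  · have : min 1 x = 1 := min_eq_left h
    rw [this, mul_one]
    refine le_trans (le_trans h2 (min_le_left _ _)) ?_
    linarith

lemma lexp_nonneg (hA : 0 < A) (hsupp : ∀ᵐ x ∂nu, x ∈ Set.Ioo 0 A)
    {l : ℝ} (hl : 0 ≤ l) : 0 ≤ lexp nu l := by
  refine integral_nonneg_of_ae ?_
  filter_upwards [hsupp] with x hx
  simp only [Pi.zero_apply]
  have : Real.exp (-(l * x)) ≤ 1 := Real.exp_le_one_iff.mpr (by nlinarith [hx.1])
  linarith

end nu


lemma one_sub_exp_subadd {ι : Type*} {l : ℝ} (hl : 0 ≤ l) :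
    ∀ (S : Finset ι) (v : ι → ℝ), (∀ i, 0 ≤ v i) →
      1 - Real.exp (-(l * ∑ i ∈ S, v i)) ≤ ∑ i ∈ S, (1 - Real.exp (-(l * v i))) := by
  intro S
  induction S using Finset.cons_induction_on with
  | empty => intro v hv; simp
  | @cons a S ha ih =>
    intro v hv
    rw [Finset.sum_cons, Finset.sum_cons]
    have h1 := ih v hv
    have hva : 0 ≤ l * v a := mul_nonneg hl (hv a)
    have hvs : 0 ≤ l * ∑ i ∈ S, v i :=
      mul_nonneg hl (Finset.sum_nonneg (fun i _ => hv i))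
    have key : 1 - Real.exp (-(l * (v a + ∑ i ∈ S, v i)))
        ≤ (1 - Real.exp (-(l * v a))) + (1 - Real.exp (-(l * ∑ i ∈ S, v i))) := by
      have e1 : Real.exp (-(l * (v a + ∑ i ∈ S, v i)))
          = Real.exp (-(l * v a)) * Real.exp (-(l * ∑ i ∈ S, v i)) := by
        rw [← Real.exp_add]; ring_nf
      have h2 : Real.exp (-(l * v a)) ≤ 1 := Real.exp_le_one_iff.mpr (by linarith)
      have h3 : Real.exp (-(l * ∑ i ∈ S, v i)) ≤ 1 := Real.exp_le_one_iff.mpr (by linarith)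
      nlinarith [Real.exp_nonneg (-(l * v a)), Real.exp_nonneg (-(l * ∑ i ∈ S, v i))]
    linarith

section Vsub

variable {P : Measure Ω} {X : ℝ → Ω → ℝ} {nu : Measure ℝ}
  (sub : IsSubordinator P X nu)

include sub

/-- submultiplicativity of `V` over `m` equal subintervals -/
lemma V_submul {s l : ℝ} (hs : 0 ≤ s) (hl : 0 ≤ l) {m : ℕ} (hm : 1 ≤ m)
    {h : ℝ} (hh : 0 ≤ h) :
    ∫ ω, Real.exp (s * (1 - Real.exp (-(l * X ((m:ℝ)*h) ω)))) ∂P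
      ≤ (∫ ω, Real.exp (s * (1 - Real.exp (-(l * X h ω)))) ∂P)^m := by
  haveI := sub.isProb
  set g : ℝ → ℝ := fun x => Real.exp (s * (1 - Real.exp (-(l * x)))) with hg
  have hgmeas : Measurable g := by fun_prop
  have hgbd : ∀ x : ℝ, 0 ≤ x → 1 ≤ g x ∧ g x ≤ Real.exp s := by
    intro x hx
    constructor
    · refine Real.one_le_exp ?_
      have : Real.exp (-(l*x)) ≤ 1 := Real.exp_le_one_iff.mpr (by nlinarith)
      nlinarith
    · refine Real.exp_le_exp.mpr ?_
      nlinarith [Real.exp_nonneg (-(l*x))]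
  -- increments
  set T : Fin (m+1) → ℝ := fun i => (i : ℕ) * h with hT
  have hTmono : Monotone T := by
    intro i j hij
    simp only [hT]
    have : (i:ℕ) ≤ (j:ℕ) := hij
    exact mul_le_mul_of_nonneg_right (by exact_mod_cast this) hh
  have hTnn : ∀ i, 0 ≤ T i := fun i => mul_nonneg (Nat.cast_nonneg _) hh
  set ξ : Fin m → Ω → ℝ := fun i ω => X (T i.succ) ω - X (T i.castSucc) ω with hξ
  have hξmeas : ∀ i, Measurable (ξ i) := fun i => (sub.meas _).sub (sub.meas _)
  have hIndep : iIndepFun ξ P :=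
    sub.indepIncrements m T hTmono hTnn
  set Y : Fin m → Ω → ℝ := fun i => g ∘ (ξ i) with hY
  have hYindep : iIndepFun Y P :=
    hIndep.comp (fun _ => g) (fun _ => hgmeas)
  have hYmeas : ∀ i, Measurable (Y i) := fun i => hgmeas.comp (hξmeas i)
  -- a.e. pointwise bound
  have hae : ∀ᵐ ω ∂P, g (X ((m:ℝ)*h) ω) ≤ ∏ i : Fin m, Y i ω ∧ (∀ i, 0 ≤ ξ i ω)
      ∧ 0 ≤ X ((m:ℝ)*h) ω := by
    filter_upwards [sub.startZero, sub.monoPaths] with ω h0 hmono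
    have hξnn : ∀ i : Fin m, 0 ≤ ξ i ω := by
      intro i
      have := hmono (hTnn i.castSucc) (hTnn i.succ) (hTmono (Fin.castSucc_le_succ i))
      simp only [hξ, sub_nonneg]
      exact this
    have hXnn : 0 ≤ X ((m:ℝ)*h) ω := by
      have h2 : X 0 ω ≤ X ((m:ℝ)*h) ω := hmono (Set.self_mem_Ici)
        (mul_nonneg (Nat.cast_nonneg m) hh) (mul_nonneg (Nat.cast_nonneg m) hh)
      rw [h0] at h2
      exact h2
    refine ⟨?_, hξnn, hXnn⟩
    have hsum : ∑ i : Fin m, ξ i ω = X ((m:ℝ)*h) ω := by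
      have hF : ∑ i ∈ Finset.range m,
          (X ((((i+1):ℕ):ℝ)*h) ω - X (((i:ℕ):ℝ)*h) ω) = X ((m:ℝ)*h) ω := by
        have := Finset.sum_range_sub (fun j : ℕ => X ((j:ℝ)*h) ω) m
        simpa [h0] using this
      rw [← hF, ← Fin.sum_univ_eq_sum_range
        (fun j : ℕ => X ((((j+1):ℕ):ℝ)*h) ω - X (((j:ℕ):ℝ)*h) ω) m]
      refine Finset.sum_congr rfl (fun i _ => ?_)
      simp only [hξ, hT, Fin.val_succ, Fin.coe_castSucc]
    have step1 : g (X ((m:ℝ)*h) ω) ≤ Real.exp (∑ i : Fin m, s * (1 - Real.exp (-(l * ξ i ω)))) := by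
      rw [hg, ← hsum]
      refine Real.exp_le_exp.mpr ?_
      rw [← Finset.mul_sum]
      refine mul_le_mul_of_nonneg_left ?_ hs
      exact one_sub_exp_subadd hl Finset.univ (fun i => ξ i ω) hξnn
    rw [Real.exp_sum] at step1
    exact step1
  -- integrability
  have hXint : Integrable (fun ω => g (X ((m:ℝ)*h) ω)) P := by
    refine (integrable_const (Real.exp s)).mono'
      ((hgmeas.comp (sub.meas _)).aestronglyMeasurable) ?_
    filter_upwards [hae] with ω hω
    rw [Real.norm_eq_abs, abs_of_nonneg (Real.exp_nonneg _)]
    exact (hgbd _ hω.2.2).2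
  have hprod_int : Integrable (fun ω => ∏ i : Fin m, Y i ω) P := by
    refine (integrable_const ((Real.exp s)^m)).mono'
      ((Finset.measurable_prod Finset.univ (fun i _ => hYmeas i)).aestronglyMeasurable) ?_
    filter_upwards [hae] with ω hω
    have hYnn : ∀ i : Fin m, 0 ≤ Y i ω :=
      fun i => le_trans zero_le_one (hgbd _ (hω.2.1 i)).1
    rw [Real.norm_eq_abs, abs_of_nonneg (Finset.prod_nonneg (fun i _ => hYnn i))]
    calc ∏ i : Fin m, Y i ω ≤ ∏ _i : Fin m, Real.exp s := by
          refine Finset.prod_le_prod (fun i _ => Real.exp_nonneg _) (fun i _ => ?_)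
          exact (hgbd _ (hω.2.1 i)).2
      _ = (Real.exp s)^m := by
          rw [Finset.prod_const, Finset.card_univ, Fintype.card_fin]
  -- put together
  have hstep : ∫ ω, g (X ((m:ℝ)*h) ω) ∂P ≤ ∫ ω, ∏ i : Fin m, Y i ω ∂P := by
    refine integral_mono_ae hXint hprod_int ?_
    filter_upwards [hae] with ω hω
    exact hω.1
  have hprod_eq : ∫ ω, ∏ i : Fin m, Y i ω ∂P = ∏ i : Fin m, ∫ ω, Y i ω ∂P :=
    indep_integral_prod hYindep hYmeas Finset.univ
  have hfactor : ∀ i : Fin m, ∫ ω, Y i ω ∂P = ∫ ω, g (X h ω) ∂P := by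
    intro i
    have hTsucc : T i.succ = h + T i.castSucc := by
      simp only [hT, Fin.val_succ, Fin.coe_castSucc]
      push_cast
      ring
    have hξeq : ξ i = fun ω => X (h + T i.castSucc) ω - X (T i.castSucc) ω := by
      funext ω
      rw [hξ]
      simp only [hTsucc]
    have hmap := sub.statIncrements (T i.castSucc) h (hTnn _) hh
    calc ∫ ω, Y i ω ∂P = ∫ x, g x ∂(Measure.map (ξ i) P) := by
          rw [integral_map (hξmeas i).aemeasurable hgmeas.aestronglyMeasurable]
          rfl
      _ = ∫ x, g x ∂(Measure.map (X h) P) := by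
          rw [hξeq, hmap]
      _ = ∫ ω, g (X h ω) ∂P := by
          rw [integral_map (sub.meas h).aemeasurable hgmeas.aestronglyMeasurable]
  calc ∫ ω, g (X ((m:ℝ)*h) ω) ∂P
      ≤ ∏ i : Fin m, ∫ ω, Y i ω ∂P := hprod_eq ▸ hstep
    _ = (∫ ω, g (X h ω) ∂P)^m := by
        rw [Finset.prod_congr rfl (fun i _ => hfactor i), Finset.prod_const,
          Finset.card_univ, Fintype.card_fin]

end Vsub


section core

variable {P : Measure Ω} {X : ℝ → Ω → ℝ} {nu : Measure ℝ} {A : ℝ}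
  (sub : IsSubordinator P X nu) (hA : 0 < A)
  (hsupp : ∀ᵐ x ∂nu, x ∈ Set.Ioo 0 A)
  (hnuint : ∫⁻ x, ENNReal.ofReal (min 1 x) ∂nu ≠ ⊤)

include sub hA hsupp

lemma X_pow_expectation {n : ℕ} (hn : 1 ≤ n) {l t : ℝ} (hl : 0 ≤ l) (ht : 0 ≤ t) :
    ∫ ω, (1 - Real.exp (-(l * X t ω)))^n ∂P
      = ∑ k ∈ Finset.range (n+1), (n.choose k : ℝ) * (-1)^(k+1)
          * (1 - Real.exp (-(t * lexp nu ((k:ℝ)*l)))) := by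
  have hptwise : ∀ ω, (1 - Real.exp (-(l * X t ω)))^n
      = ∑ k ∈ Finset.range (n+1), (n.choose k : ℝ) * (-1)^(k+1)
          * (1 - Real.exp (-(((k:ℝ)*l) * X t ω))) := by
    intro ω
    rw [alg_identity hn (Real.exp (-(l * X t ω)))]
    refine Finset.sum_congr rfl (fun k hk => ?_)
    rw [← Real.exp_nat_mul]
    ring_nf
  have hIntk : ∀ k : ℕ, Integrable
      (fun ω => (n.choose k : ℝ) * (-1)^(k+1) * (1 - Real.exp (-(((k:ℝ)*l) * X t ω)))) P := by
    intro k
    refine Integrable.const_mul ?_ _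
    refine integrable_comp_bdd sub ht (f := fun x => 1 - Real.exp (-(((k:ℝ)*l) * x)))
      (by fun_prop) (c := 1) (fun x hx => ?_)
    have h1 : Real.exp (-(((k:ℝ)*l) * x)) ≤ 1 :=
      Real.exp_le_one_iff.mpr (by nlinarith [mul_nonneg (mul_nonneg (Nat.cast_nonneg k) hl) hx])
    have h2 : 0 ≤ Real.exp (-(((k:ℝ)*l) * x)) := Real.exp_nonneg _
    show |1 - Real.exp (-(((k:ℝ)*l) * x))| ≤ 1
    rw [abs_le]; constructor <;> linarith
  calc ∫ ω, (1 - Real.exp (-(l * X t ω)))^n ∂P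
      = ∫ ω, ∑ k ∈ Finset.range (n+1), (n.choose k : ℝ) * (-1)^(k+1)
          * (1 - Real.exp (-(((k:ℝ)*l) * X t ω))) ∂P := by
        refine integral_congr_ae (ae_of_all _ (fun ω => hptwise ω))
    _ = ∑ k ∈ Finset.range (n+1), ∫ ω, (n.choose k : ℝ) * (-1)^(k+1)
          * (1 - Real.exp (-(((k:ℝ)*l) * X t ω))) ∂P := by
        exact integral_finset_sum _ (fun k _ => hIntk k)
    _ = ∑ k ∈ Finset.range (n+1), (n.choose k : ℝ) * (-1)^(k+1)
          * (1 - Real.exp (-(t * lexp nu ((k:ℝ)*l)))) := by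
        refine Finset.sum_congr rfl (fun k hk => ?_)
        rw [integral_const_mul,
          one_sub_exp_expectation sub (mul_nonneg (Nat.cast_nonneg k) hl) ht]

include hnuint in
lemma nu_pow_integral {n : ℕ} (hn : 1 ≤ n) {l : ℝ} (hl : 0 ≤ l) :
    ∫ x, (1 - Real.exp (-(l * x)))^n ∂nu
      = ∑ k ∈ Finset.range (n+1), (n.choose k : ℝ) * (-1)^(k+1) * lexp nu ((k:ℝ)*l) := by
  calc ∫ x, (1 - Real.exp (-(l * x)))^n ∂nu
      = ∫ x, ∑ k ∈ Finset.range (n+1), (n.choose k : ℝ) * (-1)^(k+1)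
          * (1 - Real.exp (-(((k:ℝ)*l) * x))) ∂nu := by
        refine integral_congr_ae (ae_of_all _ (fun x => ?_))
        beta_reduce
        rw [alg_identity hn (Real.exp (-(l * x)))]
        refine Finset.sum_congr rfl (fun k hk => ?_)
        rw [← Real.exp_nat_mul]
        ring_nf
    _ = ∑ k ∈ Finset.range (n+1), ∫ x, (n.choose k : ℝ) * (-1)^(k+1)
          * (1 - Real.exp (-(((k:ℝ)*l) * x))) ∂nu := by
        refine integral_finset_sum _ (fun k _ => ?_)
        exact (integrable_one_sub_exp hA hsupp hnuint
          (mul_nonneg (Nat.cast_nonneg _) hl)).const_mul _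
    _ = ∑ k ∈ Finset.range (n+1), (n.choose k : ℝ) * (-1)^(k+1) * lexp nu ((k:ℝ)*l) := by
        refine Finset.sum_congr rfl (fun k hk => ?_)
        rw [integral_const_mul]; rfl

include hnuint in
/-- Small-time second-order bound. -/
lemma small_time_bound {n : ℕ} (hn : 1 ≤ n) {l h : ℝ} (hl : 0 ≤ l) (hh : 0 ≤ h) :
    ∫ ω, (1 - Real.exp (-(l * X h ω)))^n ∂P
      ≤ h * ∫ x, (1 - Real.exp (-(l * x)))^n ∂nu
        + h^2 * ∑ k ∈ Finset.range (n+1), (n.choose k : ℝ) * (lexp nu ((k:ℝ)*l))^2 / 2 := by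
  rw [X_pow_expectation sub hA hsupp hn hl hh, nu_pow_integral sub hA hsupp hnuint hn hl,
    Finset.mul_sum, Finset.mul_sum, ← Finset.sum_add_distrib]
  refine Finset.sum_le_sum (fun k hk => ?_)
  have hφ : 0 ≤ lexp nu ((k:ℝ)*l) := lexp_nonneg hA hsupp (mul_nonneg (Nat.cast_nonneg _) hl)
  have hbd := abs_one_sub_exp_sub (u := h * lexp nu ((k:ℝ)*l)) (by positivity)
  have hchoose : (0:ℝ) ≤ (n.choose k : ℝ) := Nat.cast_nonneg _
  have habs : |(n.choose k : ℝ) * (-1)^(k+1) * ((1 - Real.exp (-(h * lexp nu ((k:ℝ)*l))))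
      - h * lexp nu ((k:ℝ)*l))| ≤ (n.choose k : ℝ) * ((h * lexp nu ((k:ℝ)*l))^2/2) := by
    rw [abs_mul, abs_mul, abs_pow, abs_neg, abs_one, one_pow, mul_one,
      abs_of_nonneg hchoose]
    exact mul_le_mul_of_nonneg_left hbd hchoose
  have := (abs_le.mp habs).2
  nlinarith [sq_nonneg (h * lexp nu ((k:ℝ)*l))]

end core


section ProbCore

variable {Ω : Type*} [MeasurableSpace Ω]

lemma exp_sub_one_le {v : ℝ} (hv : 0 ≤ v) : Real.exp v - 1 ≤ v * Real.exp v := by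
  have h1 : Real.exp v * (1 - Real.exp (-v)) ≤ Real.exp v * v :=
    mul_le_mul_of_nonneg_left one_sub_exp_le (Real.exp_nonneg v)
  have h2 : Real.exp v * Real.exp (-v) = 1 := by
    rw [← Real.exp_add, add_neg_cancel, Real.exp_zero]
  nlinarith

section core2

variable {P : Measure Ω} {X : ℝ → Ω → ℝ} {nu : Measure ℝ} {A : ℝ}
  (sub : IsSubordinator P X nu) (hA : 0 < A)
  (hsupp : ∀ᵐ x ∂nu, x ∈ Set.Ioo 0 A)
  (hnuint : ∫⁻ x, ENNReal.ofReal (min 1 x) ∂nu ≠ ⊤)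

include sub hA hsupp hnuint

/-- Chebyshev-type bound for the upper tail using the `n`-th moment of `1-e^{-lX}`. -/
lemma cheby {t l A' : ℝ} (ht : 0 ≤ t) (hl : 0 ≤ l) (hA' : 0 < A') {n : ℕ} (hn : 1 ≤ n) :
    (P {ω | A' < X t ω}).toReal * (1 - Real.exp (-(l * A')))^n
      ≤ ∫ ω, (1 - Real.exp (-(l * X t ω)))^n ∂P := by
  haveI := sub.isProb
  have hS : MeasurableSet {ω | A' < X t ω} := measurableSet_lt measurable_const (sub.meas t)
  have hq : 0 ≤ 1 - Real.exp (-(l * A')) := by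
    have : Real.exp (-(l * A')) ≤ 1 := Real.exp_le_one_iff.mpr (by nlinarith)
    linarith
  have hInd : ∫ ω, Set.indicator {ω' | A' < X t ω'}
      (fun _ => (1 - Real.exp (-(l * A')))^n) ω ∂P
      = (P {ω | A' < X t ω}).toReal * (1 - Real.exp (-(l * A')))^n := by
    rw [integral_indicator_const _ hS]
    simp [smul_eq_mul, Measure.real]
  rw [← hInd]
  refine integral_mono_ae ((integrable_const _).indicator hS) ?_ ?_
  · refine integrable_comp_bdd sub ht (f := fun x => (1 - Real.exp (-(l * x)))^n)
      (by fun_prop) (c := 1) (fun x hx => ?_)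
    have h1 : Real.exp (-(l * x)) ≤ 1 := Real.exp_le_one_iff.mpr (by nlinarith)
    have h2 : 0 ≤ Real.exp (-(l * x)) := Real.exp_nonneg _
    show |(1 - Real.exp (-(l * x)))^n| ≤ 1
    rw [abs_of_nonneg (pow_nonneg (by linarith) n)]
    exact pow_le_one₀ (by linarith) (by linarith)
  · filter_upwards [X_nonneg sub ht] with ω hω
    by_cases hmem : ω ∈ {ω' | A' < X t ω'}
    · rw [Set.indicator_of_mem hmem]
      refine pow_le_pow_left₀ hq ?_ n
      have hmem' : A' < X t ω := hmem
      have : Real.exp (-(l * X t ω)) ≤ Real.exp (-(l * A')) := by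
        refine Real.exp_le_exp.mpr ?_
        nlinarith [mul_le_mul_of_nonneg_left hmem'.le hl]
      linarith
    · rw [Set.indicator_of_notMem hmem]
      refine pow_nonneg ?_ n
      have : Real.exp (-(l * X t ω)) ≤ 1 := Real.exp_le_one_iff.mpr (by nlinarith)
      linarith

/-- one-step small-time bound for `V`. -/
lemma V_small {s l A' h : ℝ} (hs : 0 ≤ s) (hl : 0 ≤ l) (hA' : 0 < A') (hh : 0 ≤ h)
    (hq : 0 < 1 - Real.exp (-(l * A'))) {n : ℕ} (hn : 1 ≤ n) :
    ∫ ω, Real.exp (s * (1 - Real.exp (-(l * X h ω)))) ∂P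
      ≤ Real.exp (h * ((s * Real.exp (s * (1 - Real.exp (-(l * A')))) * lexp nu l
          + Real.exp s * (∫ x, (1 - Real.exp (-(l * x)))^n ∂nu) / (1 - Real.exp (-(l * A')))^n)
          + h * (Real.exp s * (∑ k ∈ Finset.range (n+1),
              (n.choose k : ℝ) * (lexp nu ((k:ℝ)*l))^2 / 2) / (1 - Real.exp (-(l * A')))^n))) := by
  haveI := sub.isProb
  set q' : ℝ := 1 - Real.exp (-(l * A')) with hq'def
  set En : ℝ := ∫ x, (1 - Real.exp (-(l * x)))^n ∂nu with hEn
  set Rn : ℝ := ∑ k ∈ Finset.range (n+1), (n.choose k : ℝ) * (lexp nu ((k:ℝ)*l))^2 / 2 with hRn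
  have hS : MeasurableSet {ω | A' < X h ω} := measurableSet_lt measurable_const (sub.meas h)
  -- the tail probability bound
  have htail : (P {ω | A' < X h ω}).toReal ≤ (h * En + h^2 * Rn) / q'^n := by
    rw [le_div_iff₀ (pow_pos hq n)]
    exact le_trans (cheby sub hA hsupp hnuint hh hl hA' hn)
      (small_time_bound sub hA hsupp hnuint hn hl hh)
  -- integrability pieces
  have hwInt : Integrable (fun ω => 1 - Real.exp (-(l * X h ω))) P := by
    refine integrable_comp_bdd sub hh (f := fun x => 1 - Real.exp (-(l * x)))
      (by fun_prop) (c := 1) (fun x hx => ?_)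
    have h1 : Real.exp (-(l * x)) ≤ 1 := Real.exp_le_one_iff.mpr (by nlinarith)
    have h2 : 0 ≤ Real.exp (-(l * x)) := Real.exp_nonneg _
    show |1 - Real.exp (-(l * x))| ≤ 1
    rw [abs_le]; constructor <;> linarith
  have hVInt : Integrable (fun ω => Real.exp (s * (1 - Real.exp (-(l * X h ω))))) P := by
    refine integrable_comp_bdd sub hh
      (f := fun x => Real.exp (s * (1 - Real.exp (-(l * x)))))
      (by fun_prop) (c := Real.exp s) (fun x hx => ?_)
    show |Real.exp (s * (1 - Real.exp (-(l * x))))| ≤ Real.exp s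
    rw [abs_of_nonneg (Real.exp_nonneg _)]
    refine Real.exp_le_exp.mpr ?_
    nlinarith [Real.exp_nonneg (-(l*x))]
  -- pointwise bound
  have hptw : ∀ᵐ ω ∂P, Real.exp (s * (1 - Real.exp (-(l * X h ω))))
      ≤ (1 + (s * Real.exp (s * q')) * (1 - Real.exp (-(l * X h ω))))
        + Set.indicator {ω' | A' < X h ω'} (fun _ => Real.exp s) ω := by
    filter_upwards [X_nonneg sub hh] with ω hω
    set w : ℝ := 1 - Real.exp (-(l * X h ω)) with hw
    have hw0 : 0 ≤ w := by
      have : Real.exp (-(l * X h ω)) ≤ 1 := Real.exp_le_one_iff.mpr (by nlinarith)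
      rw [hw]; linarith
    have hw1 : w ≤ 1 := by
      rw [hw]
      nlinarith [Real.exp_nonneg (-(l * X h ω))]
    by_cases hmem : ω ∈ {ω' | A' < X h ω'}
    · rw [Set.indicator_of_mem hmem]
      have h1 : Real.exp (s * w) ≤ Real.exp s := Real.exp_le_exp.mpr (by nlinarith)
      have h2 : 0 ≤ 1 + (s * Real.exp (s * q')) * w := by positivity
      linarith
    · rw [Set.indicator_of_notMem hmem, add_zero]
      simp only [Set.mem_setOf_eq, not_lt] at hmem
      have hwq : w ≤ q' := by
        rw [hw, hq'def]
        have : Real.exp (-(l * A')) ≤ Real.exp (-(l * X h ω)) :=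
          Real.exp_le_exp.mpr (by nlinarith)
        linarith
      have h1 : Real.exp (s*w) - 1 ≤ (s*w) * Real.exp (s*w) := exp_sub_one_le (by positivity)
      have h2 : Real.exp (s*w) ≤ Real.exp (s*q') :=
        Real.exp_le_exp.mpr (mul_le_mul_of_nonneg_left hwq hs)
      nlinarith [mul_nonneg hs hw0]
  -- integrate
  have hI1 : Integrable (fun ω => 1 + s * Real.exp (s * q')
      * (1 - Real.exp (-(l * X h ω)))) P :=
    (integrable_const 1).add (hwInt.const_mul _)
  have hI2 : Integrable (fun ω =>
      Set.indicator {ω' | A' < X h ω'} (fun _ => Real.exp s) ω) P :=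
    (integrable_const _).indicator hS
  have hmain : ∫ ω, Real.exp (s * (1 - Real.exp (-(l * X h ω)))) ∂P
      ≤ 1 + (s * Real.exp (s * q')) * (1 - Real.exp (-(h * lexp nu l)))
        + Real.exp s * (P {ω | A' < X h ω}).toReal := by
    have h1 := integral_mono_ae hVInt (hI1.add hI2) hptw
    simp only [Pi.add_apply] at h1
    have e1 : ∫ a, ((1 + s * Real.exp (s * q') * (1 - Real.exp (-(l * X h a))))
        + Set.indicator {ω' | A' < X h ω'} (fun _ => Real.exp s) a) ∂P
        = (∫ a, (1 + s * Real.exp (s * q') * (1 - Real.exp (-(l * X h a)))) ∂P)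
          + ∫ a, Set.indicator {ω' | A' < X h ω'} (fun _ => Real.exp s) a ∂P :=
      integral_add hI1 hI2
    have e2 : ∫ a, (1 + s * Real.exp (s * q') * (1 - Real.exp (-(l * X h a)))) ∂P
        = (∫ _a, (1:ℝ) ∂P) + ∫ a, s * Real.exp (s * q')
            * (1 - Real.exp (-(l * X h a))) ∂P :=
      integral_add (integrable_const 1) (hwInt.const_mul _)
    have e3 : ∫ a, s * Real.exp (s * q') * (1 - Real.exp (-(l * X h a))) ∂P
        = s * Real.exp (s * q') * (1 - Real.exp (-(h * lexp nu l))) := by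
      rw [integral_const_mul, one_sub_exp_expectation sub hl hh]
    have e4 : ∫ a, Set.indicator {ω' | A' < X h ω'} (fun _ => Real.exp s) a ∂P
        = (P {ω | A' < X h ω}).toReal * Real.exp s := by
      rw [integral_indicator_const _ hS]
      simp [smul_eq_mul, Measure.real]
    rw [e1, e2, e3, e4, integral_const] at h1
    simp only [measure_univ, probReal_univ, ENNReal.toReal_one, smul_eq_mul, one_mul] at h1
    linarith
  have hEw : 1 - Real.exp (-(h * lexp nu l)) ≤ h * lexp nu l := one_sub_exp_le
  have hφ : 0 ≤ lexp nu l := lexp_nonneg hA hsupp hl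
  have hfinal : ∫ ω, Real.exp (s * (1 - Real.exp (-(l * X h ω)))) ∂P
      ≤ 1 + (h * ((s * Real.exp (s * q') * lexp nu l + Real.exp s * En / q'^n)
          + h * (Real.exp s * Rn / q'^n))) := by
    refine le_trans hmain ?_
    have e1 : (s * Real.exp (s * q')) * (1 - Real.exp (-(h * lexp nu l)))
        ≤ (s * Real.exp (s * q')) * (h * lexp nu l) :=
      mul_le_mul_of_nonneg_left hEw (by positivity)
    have e2 : Real.exp s * (P {ω | A' < X h ω}).toReal
        ≤ Real.exp s * ((h * En + h^2 * Rn) / q'^n) :=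
      mul_le_mul_of_nonneg_left htail (Real.exp_nonneg s)
    have e3 : Real.exp s * ((h * En + h^2 * Rn) / q'^n)
        = h * (Real.exp s * En / q'^n) + h * (h * (Real.exp s * Rn / q'^n)) := by
      field_simp
    nlinarith
  refine le_trans hfinal ?_
  have := Real.add_one_le_exp (h * ((s * Real.exp (s * q') * lexp nu l
    + Real.exp s * En / q'^n) + h * (Real.exp s * Rn / q'^n)))
  linarith

omit sub hnuint in
lemma lexp_le_mul (hMfin : ∫⁻ x, ENNReal.ofReal x ∂nu ≠ ⊤) {l : ℝ} (hl : 0 ≤ l) :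
    lexp nu l ≤ l * (∫⁻ x, ENNReal.ofReal x ∂nu).toReal := by
  have h1 : lexp nu l = (∫⁻ x, ENNReal.ofReal (1 - Real.exp (-(l * x))) ∂nu).toReal := by
    rw [lexp, integral_eq_lintegral_of_nonneg_ae ?_ ?_]
    · filter_upwards [hsupp] with x hx
      have : Real.exp (-(l * x)) ≤ 1 := Real.exp_le_one_iff.mpr (by nlinarith [hx.1])
      simp only [Pi.zero_apply]
      linarith
    · exact (measurable_const.sub (Measurable.exp (by fun_prop))).aestronglyMeasurable
  rw [h1]
  have h2 : ∫⁻ x, ENNReal.ofReal (1 - Real.exp (-(l * x))) ∂nu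
      ≤ ENNReal.ofReal l * ∫⁻ x, ENNReal.ofReal x ∂nu := by
    rw [← lintegral_const_mul _ (by fun_prop)]
    refine lintegral_mono_ae ?_
    filter_upwards [hsupp] with x hx
    rw [← ENNReal.ofReal_mul hl]
    refine ENNReal.ofReal_le_ofReal ?_
    nlinarith [Real.add_one_le_exp (-(l*x))]
  refine le_trans (ENNReal.toReal_mono ?_ h2) ?_
  · exact ENNReal.mul_ne_top ENNReal.ofReal_ne_top hMfin
  · rw [ENNReal.toReal_mul, ENNReal.toReal_ofReal hl]

omit sub hA hsupp hnuint in
lemma V_nonneg {s l t : ℝ} :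
    0 ≤ ∫ ω, Real.exp (s * (1 - Real.exp (-(l * X t ω)))) ∂P :=
  integral_nonneg (fun ω => Real.exp_nonneg _)

/-- iterate `V_small` over `m` subintervals and let `m → ∞`. -/
lemma V_le_exp {s l A' t : ℝ} (hs : 0 ≤ s) (hl : 0 ≤ l) (hA' : 0 < A') (ht : 0 ≤ t)
    (hq : 0 < 1 - Real.exp (-(l * A'))) {n : ℕ} (hn : 1 ≤ n) :
    ∫ ω, Real.exp (s * (1 - Real.exp (-(l * X t ω)))) ∂P
      ≤ Real.exp (t * (s * Real.exp (s * (1 - Real.exp (-(l * A')))) * lexp nu l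
          + Real.exp s * (∫ x, (1 - Real.exp (-(l * x)))^n ∂nu)
            / (1 - Real.exp (-(l * A')))^n)) := by
  set q' : ℝ := 1 - Real.exp (-(l * A')) with hq'def
  set D : ℝ := s * Real.exp (s * q') * lexp nu l
      + Real.exp s * (∫ x, (1 - Real.exp (-(l * x)))^n ∂nu) / q'^n with hD
  set K : ℝ := Real.exp s * (∑ k ∈ Finset.range (n+1),
      (n.choose k : ℝ) * (lexp nu ((k:ℝ)*l))^2 / 2) / q'^n with hK
  have hstep : ∀ m : ℕ, 1 ≤ m →
      ∫ ω, Real.exp (s * (1 - Real.exp (-(l * X t ω)))) ∂P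
        ≤ Real.exp (t * D + t^2 * K / m) := by
    intro m hm
    have hm0 : ((m:ℝ)) ≠ 0 := Nat.cast_ne_zero.mpr (by omega)
    have hm0' : (0:ℝ) < m := Nat.cast_pos.mpr (by omega)
    have htm : 0 ≤ t / m := by positivity
    have ht' : ((m:ℝ) * (t/m)) = t := mul_div_cancel₀ t hm0
    calc ∫ ω, Real.exp (s * (1 - Real.exp (-(l * X t ω)))) ∂P
        = ∫ ω, Real.exp (s * (1 - Real.exp (-(l * X ((m:ℝ) * (t/m)) ω)))) ∂P := by rw [ht']
      _ ≤ (∫ ω, Real.exp (s * (1 - Real.exp (-(l * X (t/m) ω)))) ∂P)^m :=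
          V_submul sub hs hl hm htm
      _ ≤ (Real.exp ((t/m) * (D + (t/m) * K)))^m := by
          refine pow_le_pow_left₀ V_nonneg ?_ m
          exact V_small sub hA hsupp hnuint hs hl hA' htm hq hn
      _ = Real.exp ((m:ℝ) * ((t/m) * (D + (t/m) * K))) := by
          rw [← Real.exp_nat_mul]
      _ = Real.exp (t * D + t^2 * K / m) := by
          congr 1
          field_simp
  have hlim : Tendsto (fun m : ℕ => Real.exp (t * D + t^2 * K / m)) atTop
      (nhds (Real.exp (t * D))) := by
    have h1 : Tendsto (fun m : ℕ => t^2 * K / m) atTop (nhds 0) :=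
      tendsto_const_div_atTop_nhds_zero_nat _
    have h2 : Tendsto (fun m : ℕ => t * D + t^2 * K / m) atTop (nhds (t * D + 0)) :=
      tendsto_const_nhds.add h1
    rw [add_zero] at h2
    exact (Real.continuous_exp.tendsto _).comp h2
  refine ge_of_tendsto hlim ?_
  filter_upwards [eventually_ge_atTop 1] with m hm
  exact hstep m hm

/-- let `n → ∞`. -/
lemma V_le_exp' {s l A' t : ℝ} (hs : 0 ≤ s) (hl : 0 < l) (hA' : A < A') (ht : 0 ≤ t) :
    ∫ ω, Real.exp (s * (1 - Real.exp (-(l * X t ω)))) ∂P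
      ≤ Real.exp (t * (s * Real.exp (s * (1 - Real.exp (-(l * A')))) * lexp nu l)) := by
  have hA'0 : 0 < A' := lt_trans hA hA'
  set q' : ℝ := 1 - Real.exp (-(l * A')) with hq'def
  set qA : ℝ := 1 - Real.exp (-(l * A)) with hqAdef
  have hq : 0 < q' := by
    have : Real.exp (-(l * A')) < 1 := Real.exp_lt_one_iff.mpr (by nlinarith)
    rw [hq'def]; linarith
  have hqA0 : 0 ≤ qA := by
    have : Real.exp (-(l * A)) ≤ 1 := Real.exp_le_one_iff.mpr (by nlinarith)
    rw [hqAdef]; linarith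
  have hqlt : qA < q' := by
    rw [hqAdef, hq'def]
    have : Real.exp (-(l * A')) < Real.exp (-(l * A)) := Real.exp_lt_exp.mpr (by nlinarith)
    linarith
  set φ : ℝ := lexp nu l with hφdef
  have hφ0 : 0 ≤ φ := lexp_nonneg hA hsupp hl.le
  -- En bound
  have hEn : ∀ j : ℕ, ∫ x, (1 - Real.exp (-(l * x)))^(j+1) ∂nu ≤ qA^j * φ := by
    intro j
    have hInt1 : Integrable (fun x => 1 - Real.exp (-(l * x))) nu :=
      integrable_one_sub_exp hA hsupp hnuint hl.le
    have hIntn : Integrable (fun x => (1 - Real.exp (-(l * x)))^(j+1)) nu := by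
      refine hInt1.mono ((Measurable.pow_const
        (measurable_const.sub (Measurable.exp (by fun_prop))) _).aestronglyMeasurable) ?_
      filter_upwards [hsupp] with x hx
      have h1 : Real.exp (-(l * x)) ≤ 1 := Real.exp_le_one_iff.mpr (by nlinarith [hx.1])
      have h2 : 0 ≤ 1 - Real.exp (-(l * x)) := by linarith
      have h3 : (1 - Real.exp (-(l * x))) ≤ 1 := by
        nlinarith [Real.exp_nonneg (-(l*x))]
      rw [Real.norm_eq_abs, Real.norm_eq_abs, abs_of_nonneg (pow_nonneg h2 _),
        abs_of_nonneg h2]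
      exact pow_le_of_le_one h2 h3 (by omega)
    have hptw : ∀ᵐ x ∂nu, (1 - Real.exp (-(l * x)))^(j+1)
        ≤ qA^j * (1 - Real.exp (-(l * x))) := by
      filter_upwards [hsupp] with x hx
      have h1 : Real.exp (-(l * x)) ≤ 1 := Real.exp_le_one_iff.mpr (by nlinarith [hx.1])
      have h2 : 0 ≤ 1 - Real.exp (-(l * x)) := by linarith
      have h3 : 1 - Real.exp (-(l * x)) ≤ qA := by
        rw [hqAdef]
        have : Real.exp (-(l * A)) ≤ Real.exp (-(l * x)) :=
          Real.exp_le_exp.mpr (by nlinarith [hx.2])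
        linarith
      calc (1 - Real.exp (-(l * x)))^(j+1)
          = (1 - Real.exp (-(l * x)))^j * (1 - Real.exp (-(l * x))) := by rw [pow_succ]
        _ ≤ qA^j * (1 - Real.exp (-(l * x))) :=
            mul_le_mul_of_nonneg_right (pow_le_pow_left₀ h2 h3 j) h2
    calc ∫ x, (1 - Real.exp (-(l * x)))^(j+1) ∂nu
        ≤ ∫ x, qA^j * (1 - Real.exp (-(l * x))) ∂nu :=
          integral_mono_ae hIntn (hInt1.const_mul _) hptw
      _ = qA^j * φ := by rw [integral_const_mul, hφdef, lexp]
  -- apply V_le_exp with n := j+1 and pass to the limit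
  have hbound : ∀ j : ℕ,
      ∫ ω, Real.exp (s * (1 - Real.exp (-(l * X t ω)))) ∂P
        ≤ Real.exp (t * (s * Real.exp (s * q') * φ
            + Real.exp s * φ / q' * (qA/q')^j)) := by
    intro j
    refine le_trans (V_le_exp sub hA hsupp hnuint hs hl.le hA'0 ht hq
      (n := j+1) (by omega)) ?_
    refine Real.exp_le_exp.mpr (mul_le_mul_of_nonneg_left ?_ ht)
    have h1 : Real.exp s * (∫ x, (1 - Real.exp (-(l * x)))^(j+1) ∂nu) / q'^(j+1)
        ≤ Real.exp s * φ / q' * (qA/q')^j := by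
      rw [div_pow]
      rw [pow_succ']
      have hq'pow : 0 < q'^j := pow_pos hq j
      rw [div_le_iff₀ (by positivity)]
      have h2 := hEn j
      calc Real.exp s * (∫ x, (1 - Real.exp (-(l * x)))^(j+1) ∂nu)
          ≤ Real.exp s * (qA^j * φ) := mul_le_mul_of_nonneg_left h2 (Real.exp_nonneg _)
        _ = Real.exp s * φ / q' * (qA^j / q'^j) * (q' * q'^j) := by
            field_simp
    linarith
  have hlim : Tendsto (fun j : ℕ => Real.exp (t * (s * Real.exp (s * q') * φ
      + Real.exp s * φ / q' * (qA/q')^j))) atTop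
      (nhds (Real.exp (t * (s * Real.exp (s * q') * φ)))) := by
    have hρ : Tendsto (fun j : ℕ => (qA/q')^j) atTop (nhds 0) := by
      refine tendsto_pow_atTop_nhds_zero_of_lt_one (by positivity) ?_
      rw [div_lt_one hq]
      exact hqlt
    have h2 : Tendsto (fun j : ℕ => t * (s * Real.exp (s * q') * φ
        + Real.exp s * φ / q' * (qA/q')^j)) atTop
        (nhds (t * (s * Real.exp (s * q') * φ + Real.exp s * φ / q' * 0))) :=
      (tendsto_const_nhds.add (tendsto_const_nhds.mul hρ)).const_mul t
    rw [mul_zero, add_zero] at h2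
    exact (Real.continuous_exp.tendsto _).comp h2
  exact ge_of_tendsto hlim (Eventually.of_forall hbound)

/-- Chernoff step. -/
lemma chernoff {s l t B : ℝ} (hs : 0 ≤ s) (hl : 0 ≤ l) (ht : 0 ≤ t) :
    (P {ω | B < X t ω}).toReal
      ≤ Real.exp (-(s * (1 - Real.exp (-(l * B)))))
          * ∫ ω, Real.exp (s * (1 - Real.exp (-(l * X t ω)))) ∂P := by
  haveI := sub.isProb
  have hS : MeasurableSet {ω | B < X t ω} := measurableSet_lt measurable_const (sub.meas t)
  have hVInt : Integrable (fun ω => Real.exp (s * (1 - Real.exp (-(l * X t ω))))) P := by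
    refine integrable_comp_bdd sub ht
      (f := fun x => Real.exp (s * (1 - Real.exp (-(l * x)))))
      (by fun_prop) (c := Real.exp s) (fun x hx => ?_)
    show |Real.exp (s * (1 - Real.exp (-(l * x))))| ≤ Real.exp s
    rw [abs_of_nonneg (Real.exp_nonneg _)]
    refine Real.exp_le_exp.mpr ?_
    nlinarith [Real.exp_nonneg (-(l*x))]
  have hInd : ∫ ω, Set.indicator {ω' | B < X t ω'} (fun _ => (1:ℝ)) ω ∂P
      = (P {ω | B < X t ω}).toReal := by
    rw [integral_indicator_const _ hS]
    simp [Measure.real]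
  rw [← hInd, ← integral_const_mul]
  refine integral_mono_ae ((integrable_const _).indicator hS) (hVInt.const_mul _) ?_
  filter_upwards [X_nonneg sub ht] with ω hω
  rw [← Real.exp_add]
  by_cases hmem : ω ∈ {ω' | B < X t ω'}
  · rw [Set.indicator_of_mem hmem]
    have hmem' : B < X t ω := hmem
    refine le_trans (le_of_eq (Real.exp_zero).symm) (Real.exp_le_exp.mpr ?_)
    have : Real.exp (-(l * X t ω)) ≤ Real.exp (-(l * B)) :=
      Real.exp_le_exp.mpr (by nlinarith [mul_le_mul_of_nonneg_left hmem'.le hl])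
    nlinarith
  · rw [Set.indicator_of_notMem hmem]
    exact Real.exp_nonneg _

/-- The core tail estimate for the truncated subordinator. -/
lemma core_tail_bound (hMfin : ∫⁻ x, ENNReal.ofReal x ∂nu ≠ ⊤)
    {t lam B : ℝ} (ht : 0 ≤ t) (hlam : 0 < lam) :
    (P {ω | B < X t ω}).toReal
      ≤ Real.exp (t * lam * Real.exp (lam * A)
          * (∫⁻ x, ENNReal.ofReal x ∂nu).toReal - lam * B) := by
  haveI := sub.isProb
  set M : ℝ := (∫⁻ x, ENNReal.ofReal x ∂nu).toReal with hM
  have hM0 : 0 ≤ M := ENNReal.toReal_nonneg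
  -- bound for each l > 0 with A' := A + l
  have hl_bound : ∀ l : ℝ, 0 < l →
      (P {ω | B < X t ω}).toReal
        ≤ Real.exp (t * lam * Real.exp (lam * (A + l)) * M
            - (lam / l) * (1 - Real.exp (-(l * B)))) := by
    intro l hl
    set s : ℝ := lam / l with hs_def
    have hs : 0 < s := by positivity
    have hA' : A < A + l := by linarith
    have h1 := chernoff sub hA hsupp hnuint (B := B) hs.le hl.le ht
    have h2 := V_le_exp' sub hA hsupp hnuint (A' := A + l) hs.le hl hA' ht
    have h3 : (P {ω | B < X t ω}).toReal
        ≤ Real.exp (-(s * (1 - Real.exp (-(l * B)))))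
          * Real.exp (t * (s * Real.exp (s * (1 - Real.exp (-(l * (A + l))))) * lexp nu l)) := by
      refine le_trans h1 (mul_le_mul_of_nonneg_left h2 (Real.exp_nonneg _))
    rw [← Real.exp_add] at h3
    refine le_trans h3 (Real.exp_le_exp.mpr ?_)
    have hq'le : s * (1 - Real.exp (-(l * (A + l)))) ≤ lam * (A + l) := by
      have h4 : 1 - Real.exp (-(l * (A + l))) ≤ l * (A + l) := one_sub_exp_le
      calc s * (1 - Real.exp (-(l * (A + l)))) ≤ s * (l * (A + l)) :=
            mul_le_mul_of_nonneg_left h4 hs.le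
        _ = lam * (A + l) := by
            rw [hs_def]; field_simp
    have hφle : s * lexp nu l ≤ lam * M := by
      have h5 : lexp nu l ≤ l * M := lexp_le_mul hA hsupp hMfin hl.le
      calc s * lexp nu l ≤ s * (l * M) := mul_le_mul_of_nonneg_left h5 hs.le
        _ = lam * M := by rw [hs_def]; field_simp
    have hφ0 : 0 ≤ lexp nu l := lexp_nonneg hA hsupp hl.le
    have hmain : t * (s * Real.exp (s * (1 - Real.exp (-(l * (A + l))))) * lexp nu l)
        ≤ t * lam * Real.exp (lam * (A + l)) * M := by
      have e1 : Real.exp (s * (1 - Real.exp (-(l * (A + l)))))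
          ≤ Real.exp (lam * (A + l)) := Real.exp_le_exp.mpr hq'le
      calc t * (s * Real.exp (s * (1 - Real.exp (-(l * (A + l))))) * lexp nu l)
          ≤ t * (Real.exp (lam * (A + l)) * (s * lexp nu l)) := by
            refine mul_le_mul_of_nonneg_left ?_ ht
            calc s * Real.exp (s * (1 - Real.exp (-(l * (A + l))))) * lexp nu l
                ≤ s * Real.exp (lam * (A + l)) * lexp nu l := by
                  refine mul_le_mul_of_nonneg_right
                    (mul_le_mul_of_nonneg_left e1 hs.le) hφ0
              _ = Real.exp (lam * (A + l)) * (s * lexp nu l) := by ring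
        _ ≤ t * (Real.exp (lam * (A + l)) * (lam * M)) := by
            refine mul_le_mul_of_nonneg_left
              (mul_le_mul_of_nonneg_left hφle (Real.exp_nonneg _)) ht
        _ = t * lam * Real.exp (lam * (A + l)) * M := by ring
    linarith
  -- limit l → 0⁺
  refine ge_of_tendsto (x := nhdsWithin 0 (Set.Ioi (0:ℝ)))
    (f := fun l : ℝ => Real.exp (t * lam * Real.exp (lam * (A + l)) * M
      - (lam / l) * (1 - Real.exp (-(l * B))))) ?_ ?_
  · -- convergence of the bound
    have hslope : Tendsto (fun l : ℝ => (1 - Real.exp (-(l * B))) / l)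
        (nhdsWithin 0 (Set.Ioi (0:ℝ))) (nhds B) := by
      have hd : HasDerivAt (fun u : ℝ => 1 - Real.exp (-(u * B))) B 0 := by
        have hinner : HasDerivAt (fun u : ℝ => -(u * B)) (-B) 0 := by
          exact (((hasDerivAt_id (0:ℝ)).mul_const B).neg).congr_deriv (by simp)
        have hexp := (Real.hasDerivAt_exp (-(0 * B))).comp 0 hinner
        have := (hasDerivAt_const (0:ℝ) (1:ℝ)).sub hexp
        exact this.congr_deriv (by simp)
      have h6 := hasDerivAt_iff_tendsto_slope.mp hd
      have h7 : Tendsto (slope (fun u : ℝ => 1 - Real.exp (-(u * B))) 0)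
          (nhdsWithin 0 (Set.Ioi (0:ℝ))) (nhds B) :=
        h6.mono_left (nhdsWithin_mono 0 (fun x hx => ne_of_gt hx))
      refine h7.congr (fun l => ?_)
      rw [slope_def_field]
      simp
    have h8 : Tendsto (fun l : ℝ => t * lam * Real.exp (lam * (A + l)) * M
        - (lam / l) * (1 - Real.exp (-(l * B))))
        (nhdsWithin 0 (Set.Ioi (0:ℝ)))
        (nhds (t * lam * Real.exp (lam * A) * M - lam * B)) := by
      have h9 : Tendsto (fun l : ℝ => t * lam * Real.exp (lam * (A + l)) * M)
          (nhdsWithin 0 (Set.Ioi (0:ℝ))) (nhds (t * lam * Real.exp (lam * A) * M)) := by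
        have : ContinuousAt (fun l : ℝ => t * lam * Real.exp (lam * (A + l)) * M) 0 := by
          fun_prop
        have h10 : Tendsto (fun l : ℝ => t * lam * Real.exp (lam * (A + l)) * M)
            (nhdsWithin 0 (Set.Ioi (0:ℝ))) (nhds (t * lam * Real.exp (lam * (A + 0)) * M)) :=
          this.tendsto.mono_left nhdsWithin_le_nhds
        simpa using h10
      have h11 : Tendsto (fun l : ℝ => (lam / l) * (1 - Real.exp (-(l * B))))
          (nhdsWithin 0 (Set.Ioi (0:ℝ))) (nhds (lam * B)) := by
        have h12 := hslope.const_mul lam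
        refine h12.congr (fun l => ?_)
        ring
      exact h9.sub h11
    exact (Real.continuous_exp.tendsto _).comp h8
  · filter_upwards [self_mem_nhdsWithin] with l hl
    exact hl_bound l hl
end core2


end ProbCore

/-- Lemma `keylemma`. Let `Π` be a Lévy measure on `(0,∞)` whose
tail is regularly varying at `∞` with index `-α`, `α ∈ (0,1)` (or, more generally,
has lower Matuszewska index `> -1`). Then there is `C > 0`, depending only on `Π`,
such that for all `t > 0`, `A > 1`, `B > 0`, `H ∈ (0,1)`, the subordinator `X^{(0,A)}`
with Lévy measure `Π` restricted to `(0,A)` satisfies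
`P(X_t^{(0,A)} > B) ≤ exp(C t log(1/H) H^{-A/B} ov(A) A/B) · H`. -/
theorem truncated_subordinator_upper_tail
    {Ω : Type*} [MeasurableSpace Ω] (P : Measure Ω) (Pi : Measure ℝ)
    (hsupp : Pi (Set.Iic 0) = 0)
    (hint : ∫⁻ x, ENNReal.ofReal (min 1 x) ∂Pi ≠ ⊤)
    (htail : (∃ α ∈ Set.Ioo (0:ℝ) 1, ∀ lam > (0:ℝ),
        Tendsto (fun x => tail Pi (lam * x) / tail Pi x) atTop (nhds (lam ^ (-α))))
      ∨ (∃ b > (-1:ℝ), ∃ C₀ > (0:ℝ), ∀ Lam > (1:ℝ), ∀ ε ∈ Set.Ioo (0:ℝ) 1,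
        ∀ᶠ x in atTop, ∀ lam ∈ Set.Icc (1:ℝ) Lam,
          (1 - ε) * C₀ * lam ^ b ≤ tail Pi (lam * x) / tail Pi x))
    (XT : ℝ → ℝ → Ω → ℝ)
    (hXT : ∀ a > (0:ℝ), IsSubordinator P (XT a) (Pi.restrict (Set.Ioo 0 a))) :
    ∃ C > (0:ℝ), ∀ t > (0:ℝ), ∀ A > (1:ℝ), ∀ B > (0:ℝ), ∀ H ∈ Set.Ioo (0:ℝ) 1,
      (P {ω | B < XT A t ω}).toReal
        ≤ Real.exp (C * t * Real.log (1 / H) * H ^ (-(A / B)) * tail Pi A * (A / B))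
            * H := by
  classical
  obtain ⟨C₁, hC₁, hmom⟩ := moment_bound hint htail
  refine ⟨C₁, hC₁, ?_⟩
  intro t ht A hA B hB H hH
  have hA0 : (0:ℝ) < A := by linarith
  set nu : Measure ℝ := Pi.restrict (Set.Ioo 0 A) with hnu
  have sub : IsSubordinator P (XT A) nu := hXT A hA0
  have hsuppnu : ∀ᵐ x ∂nu, x ∈ Set.Ioo 0 A := ae_restrict_mem measurableSet_Ioo
  have hnuint : ∫⁻ x, ENNReal.ofReal (min 1 x) ∂nu ≠ ⊤ :=
    ne_top_of_le_ne_top hint (setLIntegral_le_lintegral _ _)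
  have hMfin : ∫⁻ x, ENNReal.ofReal x ∂nu ≠ ⊤ := lintegral_x_lt_top hint hA.le
  set M : ℝ := (∫⁻ x, ENNReal.ofReal x ∂nu).toReal with hM
  have hM0 : 0 ≤ M := ENNReal.toReal_nonneg
  have hMle : M ≤ C₁ * (A * tail Pi A) := hmom A hA
  set L : ℝ := Real.log (1 / H) with hL
  have hL0 : 0 < L := Real.log_pos (by rw [lt_div_iff₀ hH.1]; linarith [hH.2])
  set lam : ℝ := L / B with hlam
  have hlam0 : 0 < lam := by positivity
  have core := core_tail_bound sub hA0 hsuppnu hnuint hMfin (B := B) ht.le hlam0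
  refine le_trans core ?_
  have hlamB : lam * B = L := by rw [hlam]; field_simp
  have hHL : Real.exp (-(lam * B)) = H := by
    rw [hlamB, hL, one_div, Real.log_inv, neg_neg, Real.exp_log hH.1]
  have hrpow : H ^ (-(A / B)) = Real.exp (lam * A) := by
    rw [Real.rpow_def_of_pos hH.1]
    congr 1
    have hlogH : Real.log H = -L := by rw [hL, one_div, Real.log_inv, neg_neg]
    rw [hlogH, hlam]
    field_simp
    try ring
  rw [sub_eq_add_neg, Real.exp_add, hHL]
  refine mul_le_mul_of_nonneg_right ?_ hH.1.le
  refine Real.exp_le_exp.mpr ?_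
  rw [hrpow]
  have h1 : t * lam * Real.exp (lam * A) * M
      ≤ t * lam * Real.exp (lam * A) * (C₁ * (A * tail Pi A)) := by
    refine mul_le_mul_of_nonneg_left hMle ?_
    positivity
  refine le_trans h1 (le_of_eq ?_)
  rw [hlam]
  field_simp


end ConstrainedLocalTime
end
end

section
/- Assume the case (i) conditions on ov, f, and g, and fix A > max(3, B-1). Then there exists a constant C > 0 such that for all h > 0 and all y > g(h): ∫_{t₀(y)}^∞ (ov(g(s+h) - y) - ov(g(s))) ds ≤ C · y f'(y) ov(y), where t₀(y) := max(f(Ay), f(1 + 2/A)). -/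
open MeasureTheory Filter Real Set

noncomputable section

set_option maxHeartbeats 1600000

/-- Lemma `lemma4`. Under the case (i) conditions on `ov`, `f`
and `g = f⁻¹`, and `A > max(3, B-1)`, there is `C > 0` such that uniformly in
`h > 0`, `y > g(h)`:
`∫_{t₀(y)}^∞ (ov(g(s+h)-y) - ov(g(s))) ds ≤ C y f'(y) ov(y)`,
where `t₀(y) = max(f(Ay), f(1+2/A))`. -/
theorem tail_difference_integral_bound
    (α : ℝ) (hα : α ∈ Set.Ioo (0:ℝ) 1) (ov L f g : ℝ → ℝ) (B N A : ℝ)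
    (hov_anti : AntitoneOn ov (Set.Ioi 0))
    (hov_pos : ∀ x > (0:ℝ), 0 < ov x)
    (hov_eq : ∀ x > (0:ℝ), ov x = x ^ (-α) * L x)
    (hL : ∀ lam > (0:ℝ), Tendsto (fun t => L (lam * t) / L t) atTop (nhds 1))
    (hB : 0 < B) (hN : 0 < N)
    (hxNL : MonotoneOn (fun x => x ^ N * L x) (Set.Ioi B))
    (hf0 : f 0 ∈ Set.Ioo (0:ℝ) 1)
    (hf_mono : StrictMonoOn f (Set.Ici 0))
    (hf_cont : ContinuousOn f (Set.Ici 0))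
    (hf_diff : ∀ t > (0:ℝ), DifferentiableAt ℝ f t)
    (hf_top : Tendsto f atTop atTop)
    (htfov_anti : AntitoneOn (fun t => t * deriv f t * ov t) (Set.Ioi 0))
    (htfov_zero : Tendsto (fun t => t * deriv f t * ov t) atTop (nhds 0))
    (hg_inv : ∀ x ≥ (0:ℝ), g (f x) = x)
    (hf_inv : ∀ y, f 0 ≤ y → f (g y) = y)
    (hg_zero : ∀ x, 0 ≤ x → x < f 0 → g x = 0)
    (hA : max 3 (B - 1) < A) :
    ∃ C > (0:ℝ), ∀ h > (0:ℝ), ∀ y, g h < y →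
      ∫ s in Set.Ioi (max (f (A * y)) (f (1 + 2 / A))),
          (ov (g (s + h) - y) - ov (g s))
        ≤ C * (y * deriv f y * ov y) := by
  obtain ⟨hα0, hα1⟩ := hα
  have hA3 : (3:ℝ) < A := lt_of_le_of_lt (le_max_left _ _) hA
  have hA0 : (0:ℝ) < A := by linarith
  have hf00 : 0 < f 0 := hf0.1
  have hfmono : MonotoneOn f (Set.Ici 0) := hf_mono.monotoneOn
  have hfpos : ∀ x, 0 ≤ x → 0 < f x := by
    intro x hx
    rcases eq_or_lt_of_le hx with hh | hh
    · rw [← hh]; exact hf00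
    · exact hf00.trans_le (hfmono (Set.mem_Ici.2 le_rfl) (Set.mem_Ici.2 hx) hx)
  -- g representation on [f 0, ∞)
  have hgrep : ∀ s, f 0 ≤ s → 0 ≤ g s ∧ f (g s) = s := by
    intro s hs
    obtain ⟨x1, hx11, hx12⟩ :=
      ((tendsto_atTop.1 hf_top s).and (eventually_ge_atTop (0:ℝ))).exists
    obtain ⟨x, hxmem, hfx⟩ :=
      intermediate_value_Icc hx12 (hf_cont.mono (fun u hu => Set.mem_Ici.2 hu.1)) ⟨hs, hx11⟩
    have hgx : g s = x := by rw [← hfx, hg_inv x hxmem.1]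
    rw [hgx, ← hfx] at *
    exact ⟨hxmem.1, rfl⟩
  have hgmono : ∀ s t, f 0 ≤ s → s ≤ t → g s ≤ g t := by
    intro s t hs hst
    obtain ⟨h1a, h1b⟩ := hgrep s hs
    obtain ⟨h2a, h2b⟩ := hgrep t (hs.trans hst)
    by_contra hlt
    push_neg at hlt
    have := hf_mono (Set.mem_Ici.2 h2a) (Set.mem_Ici.2 h1a) hlt
    rw [h1b, h2b] at this; linarith
  have hglb : ∀ x s, 0 ≤ x → f x ≤ s → x ≤ g s := by
    intro x s hx hxs
    have hs : f 0 ≤ s :=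
      le_trans (hfmono (Set.mem_Ici.2 le_rfl) (Set.mem_Ici.2 hx) hx) hxs
    obtain ⟨hg0, hgs⟩ := hgrep s hs
    by_contra hlt
    push_neg at hlt
    have := hf_mono (Set.mem_Ici.2 hg0) (Set.mem_Ici.2 hx) hlt
    rw [hgs] at this; linarith
  -- nonnegativity and positivity of t ↦ t f'(t) ov(t)
  have hv_nonneg : ∀ t, 0 < t → 0 ≤ t * deriv f t * ov t := by
    intro t ht
    refine le_of_tendsto htfov_zero ?_
    filter_upwards [eventually_ge_atTop t] with u hu
    simpa using htfov_anti (Set.mem_Ioi.2 ht) (Set.mem_Ioi.2 (ht.trans_le hu)) hu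
  have hderiv_pos : ∀ t, 0 < t → 0 < deriv f t := by
    intro t ht
    have hovt := hov_pos t ht
    rcases lt_or_ge 0 (deriv f t) with h | h
    · exact h
    have hd0 : deriv f t = 0 := by
      have h9 : 0 ≤ deriv f t := by
        by_contra hng
        push_neg at hng
        have h10 := mul_neg_of_neg_of_pos hng (mul_pos ht hovt)
        have h11 := hv_nonneg t ht
        linarith
      linarith
    have hall : ∀ u, t ≤ u → deriv f u = 0 := by
      intro u hu
      have hu0 : 0 < u := ht.trans_le hu
      have h1 : t * deriv f t * ov t = 0 := by rw [hd0]; ring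
      have h2 := htfov_anti (Set.mem_Ioi.2 ht) (Set.mem_Ioi.2 hu0) hu
      have h3 := hv_nonneg u hu0
      have h4 : u * deriv f u * ov u = 0 := le_antisymm (by rw [← h1]; exact h2) h3
      have hovu := hov_pos u hu0
      rcases mul_eq_zero.1 h4 with h5 | h5
      · rcases mul_eq_zero.1 h5 with h6 | h6
        · exact absurd h6 (ne_of_gt hu0)
        · exact h6
      · exact absurd h5 (ne_of_gt hovu)
    obtain ⟨c, hc, hceq⟩ := exists_deriv_eq_slope f (show t < t + 1 by linarith)
      (hf_cont.mono (fun u hu => Set.mem_Ici.2 (le_trans ht.le hu.1)))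
      (fun u hu => (hf_diff u (ht.trans hu.1)).differentiableWithinAt)
    have hfc : f t < f (t + 1) :=
      hf_mono (Set.mem_Ici.2 ht.le) (Set.mem_Ici.2 (by linarith)) (by linarith)
    rw [hall c hc.1.le] at hceq
    have h8 : t + 1 - t = 1 := by ring
    rw [h8, div_one] at hceq
    linarith
  -- constants
  set n : ℕ := ⌈N⌉₊ + 1 with hn
  have hNn : α + N ≤ (n : ℝ) := by
    have h1 : N ≤ (⌈N⌉₊ : ℝ) := Nat.le_ceil N
    have h2 : ((⌈N⌉₊ + 1 : ℕ) : ℝ) = (⌈N⌉₊ : ℝ) + 1 := by push_cast; ring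
    rw [hn, h2]; linarith
  set c₃ : ℝ := (n : ℝ) * (3 / 2) ^ n with hc₃
  have hc₃pos : 0 < c₃ := by
    rw [hc₃]; positivity
  set y₁ : ℝ := (B + 1) / (A - 1) with hy₁
  have hy₁pos : 0 < y₁ := div_pos (by linarith) (by linarith)
  set Mbar : ℝ := max (max (A * y₁) (1 + 2 / A)) (B + 1 + y₁) with hMbar
  have hMbar0 : 0 ≤ Mbar := le_trans (by positivity : (0:ℝ) ≤ A * y₁)
    (le_trans (le_max_left _ _) (le_max_left _ _))
  set δ₀ : ℝ := (1 - 1 / A) * (1 + 2 / A) with hδ₀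
  have h1A : (1:ℝ) / A < 1 / 3 := by
    rw [div_lt_div_iff₀ hA0 (by norm_num)]; linarith
  have hδ₀pos : 0 < δ₀ := by
    rw [hδ₀]
    have : (0:ℝ) < 1 - 1 / A := by linarith
    have h2 : (0:ℝ) < 1 + 2 / A := by positivity
    positivity
  have hδ₀le : δ₀ ≤ 1 + 2 / A := by
    rw [hδ₀]
    have h1 : (0:ℝ) < 1 + 2 / A := by positivity
    have h2 : (0:ℝ) < 1 / A := by positivity
    have h3 : (1 - 1 / A) * (1 + 2 / A) ≤ 1 * (1 + 2 / A) :=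
      mul_le_mul_of_nonneg_right (by linarith) h1.le
    linarith
  set m₀ : ℝ := y₁ * deriv f y₁ * ov y₁ with hm₀
  have hm₀pos : 0 < m₀ := by
    rw [hm₀]
    exact mul_pos (mul_pos hy₁pos (hderiv_pos _ hy₁pos)) (hov_pos _ hy₁pos)
  set C₁ : ℝ := 2 * (c₃ * 2 ^ n) / A with hC₁
  have hC₁nonneg : 0 ≤ C₁ := by
    rw [hC₁]
    exact div_nonneg (by positivity) hA0.le
  set C₂ : ℝ := f Mbar * ov δ₀ / m₀ with hC₂
  have hC₂nonneg : 0 ≤ C₂ := by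
    rw [hC₂]
    exact div_nonneg (mul_nonneg (hfpos _ hMbar0).le (hov_pos _ hδ₀pos).le) hm₀pos.le
  have hfmax : ∀ u v : ℝ, 0 ≤ u → 0 ≤ v → max (f u) (f v) = f (max u v) := by
    intro u v hu hv
    rcases le_total u v with hle | hle
    · rw [max_eq_right (hfmono (Set.mem_Ici.2 hu) (Set.mem_Ici.2 hv) hle), max_eq_right hle]
    · rw [max_eq_left (hfmono (Set.mem_Ici.2 hv) (Set.mem_Ici.2 hu) hle), max_eq_left hle]
  refine ⟨C₁ + C₂ + 1, by linarith, ?_⟩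
  intro h hh y hgy
  have hy0 : 0 < y := by
    rcases lt_or_ge h (f 0) with hcase | hcase
    · rw [hg_zero h hh.le hcase] at hgy; exact hgy
    · exact lt_of_le_of_lt (hgrep h hcase).1 hgy
  set t₀ : ℝ := max (f (A * y)) (f (1 + 2 / A)) with ht₀
  set K : ℝ := y * deriv f y * ov y with hK
  have hKpos : 0 < K := by
    rw [hK]
    exact mul_pos (mul_pos hy0 (hderiv_pos _ hy0)) (hov_pos _ hy0)
  have hAy0 : 0 < A * y := mul_pos hA0 hy0
  have h2A0 : (0:ℝ) < 1 + 2 / A := by positivity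
  set a : ℝ := max (max (A * y) (1 + 2 / A)) (B + 1 + y) with ha
  have haAy : A * y ≤ a := le_trans (le_max_left _ _) (le_max_left _ _)
  have ha2A : 1 + 2 / A ≤ a := le_trans (le_max_right _ _) (le_max_left _ _)
  have haB1 : B + 1 + y ≤ a := le_max_right _ _
  have ha0 : 0 < a := lt_of_lt_of_le hAy0 haAy
  have ha1 : 1 < a := by
    have : (0:ℝ) < 2 / A := by positivity
    linarith
  have haB : B < a := by linarith
  have hay : y ≤ a := by
    have h1 : 1 * y ≤ A * y := mul_le_mul_of_nonneg_right (by linarith) hy0.le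
    linarith
  -- t₀ = f (max (A y) (1 + 2/A))
  have ht₀eq : t₀ = f (max (A * y) (1 + 2 / A)) := by
    rw [ht₀, hfmax _ _ hAy0.le h2A0.le]
  have ht₀fa : t₀ ≤ f a := by
    rw [ht₀eq]
    exact hfmono (Set.mem_Ici.2 (le_max_of_le_left hAy0.le))
      (Set.mem_Ici.2 ha0.le) (max_le haAy ha2A)
  have hf0t₀ : f 0 ≤ t₀ := by
    rw [ht₀]
    exact le_trans (hfmono (Set.mem_Ici.2 le_rfl) (Set.mem_Ici.2 h2A0.le) h2A0.le)
      (le_max_right _ _)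
  have ht₀pos : 0 < t₀ := hf00.trans_le hf0t₀
  -- lower bounds for g on [t₀, ∞)
  have hgt : ∀ σ, t₀ ≤ σ → A * y ≤ g σ ∧ 1 + 2 / A ≤ g σ := by
    intro σ hσ
    constructor
    · exact hglb _ _ hAy0.le (le_trans (le_trans (le_max_left _ _) (le_of_eq ht₀.symm)) hσ)
    · exact hglb _ _ h2A0.le (le_trans (le_trans (le_max_right _ _) (le_of_eq ht₀.symm)) hσ)
  have hδle : ∀ σ, t₀ ≤ σ → δ₀ ≤ g σ - y := by
    intro σ hσ
    obtain ⟨h1, h2⟩ := hgt σ hσ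
    rw [hδ₀]
    have hgσ0 : 0 < g σ := lt_of_lt_of_le h2A0 h2
    have hy' : y ≤ g σ / A := by rw [le_div_iff₀ hA0, mul_comm]; exact h1
    have h5 : (1 - 1 / A) * g σ ≤ g σ - y := by
      have h3 : g σ - g σ / A ≤ g σ - y := by linarith
      have h4 : (1 - 1 / A) * g σ = g σ - g σ / A := by field_simp
      linarith
    have h6 : (0:ℝ) ≤ 1 - 1 / A := by linarith
    calc (1 - 1 / A) * (1 + 2 / A) ≤ (1 - 1 / A) * g σ :=
          mul_le_mul_of_nonneg_left h2 h6
      _ ≤ g σ - y := h5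
  -- globally monotone modifications
  set Gt : ℝ → ℝ := fun σ => g (max σ (f 0)) with hGt
  have hGtmono : Monotone Gt := by
    intro σ σ' hle
    exact hgmono _ _ (le_max_right _ _) (max_le_max hle le_rfl)
  have hGt0 : ∀ σ, 0 ≤ Gt σ := fun σ => (hgrep _ (le_max_right _ _)).1
  set χ : ℝ → ℝ := fun σ => ov (max (Gt σ - y) δ₀) with hχ
  set ψ : ℝ → ℝ := fun σ => ov (max (Gt σ) δ₀) with hψ
  have hχanti : Antitone χ := by
    intro σ σ' hle
    exact hov_anti (Set.mem_Ioi.2 (lt_of_lt_of_le hδ₀pos (le_max_right _ _)))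
      (Set.mem_Ioi.2 (lt_of_lt_of_le hδ₀pos (le_max_right _ _)))
      (max_le_max (by linarith [hGtmono hle]) le_rfl)
  have hψanti : Antitone ψ := by
    intro σ σ' hle
    exact hov_anti (Set.mem_Ioi.2 (lt_of_lt_of_le hδ₀pos (le_max_right _ _)))
      (Set.mem_Ioi.2 (lt_of_lt_of_le hδ₀pos (le_max_right _ _)))
      (max_le_max (hGtmono hle) le_rfl)
  set D2 : ℝ → ℝ := fun σ => χ σ - ψ σ with hD2
  have hψpos : ∀ σ, 0 < ψ σ := fun σ =>
    hov_pos _ (lt_of_lt_of_le hδ₀pos (le_max_right _ _))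
  have hD2nonneg : ∀ σ, 0 ≤ D2 σ := by
    intro σ
    have : ψ σ ≤ χ σ :=
      hov_anti (Set.mem_Ioi.2 (lt_of_lt_of_le hδ₀pos (le_max_right _ _)))
        (Set.mem_Ioi.2 (lt_of_lt_of_le hδ₀pos (le_max_right _ _)))
        (max_le_max (by linarith [hy0]) le_rfl)
    simp only [hD2]; linarith
  have hD2int : ∀ u v : ℝ, IntervalIntegrable D2 volume u v := by
    intro u v
    exact (hχanti.intervalIntegrable).sub (hψanti.intervalIntegrable)
  have hχbound : ∀ σ, χ σ ≤ ov δ₀ := by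
    intro σ
    exact hov_anti (Set.mem_Ioi.2 hδ₀pos)
      (Set.mem_Ioi.2 (lt_of_lt_of_le hδ₀pos (le_max_right _ _))) (le_max_right _ _)
  -- identification on [t₀, ∞)
  have hD2eq : ∀ σ, t₀ ≤ σ → D2 σ = ov (g σ - y) - ov (g σ) := by
    intro σ hσ
    have hmax : max σ (f 0) = σ := max_eq_left (hf0t₀.trans hσ)
    have h1 : Gt σ = g σ := by rw [hGt]; simp only [hmax]
    have h2 : max (Gt σ - y) δ₀ = g σ - y := by
      rw [h1]; exact max_eq_left (hδle σ hσ)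
    have h3 : max (Gt σ) δ₀ = g σ := by
      rw [h1]; exact max_eq_left (le_trans hδ₀le (hgt σ hσ).2)
    simp only [hD2, hχ, hψ, h2, h3]
  -- Potter-type pointwise bound
  have hLpos : ∀ u : ℝ, 0 < u → 0 < L u := by
    intro u hu
    have h1 := hov_pos u hu
    rw [hov_eq u hu] at h1
    by_contra hng
    push_neg at hng
    have hr := Real.rpow_pos_of_pos hu (-α)
    have h2 : u ^ (-α) * L u ≤ u ^ (-α) * 0 :=
      mul_le_mul_of_nonneg_left hng hr.le
    rw [mul_zero] at h2
    linarith
  have hPotter : ∀ u : ℝ, A * y ≤ u → B + 1 + y ≤ u →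
      ov (u - y) - ov u ≤ c₃ * (y / u) * ov u := by
    intro u hu1 hu2
    have hu0 : 0 < u := lt_of_lt_of_le hAy0 hu1
    have huy0 : 0 < u - y := by linarith
    have huyB : B < u - y := by linarith
    have huB : B < u := by linarith
    have hLrel := hxNL (Set.mem_Ioi.2 huyB) (Set.mem_Ioi.2 huB) (by linarith : u - y ≤ u)
    simp only at hLrel
    -- key1 : ov (u-y) * (u-y)^(α+N) ≤ ov u * u^(α+N)
    have hexp : -α + (α + N) = N := by ring
    have key1 : ov (u - y) * (u - y) ^ (α + N) ≤ ov u * u ^ (α + N) := by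
      rw [hov_eq _ huy0, hov_eq _ hu0]
      calc (u - y) ^ (-α) * L (u - y) * (u - y) ^ (α + N)
          = (u - y) ^ N * L (u - y) := by
            rw [mul_right_comm, ← Real.rpow_add huy0, hexp]
        _ ≤ u ^ N * L u := hLrel
        _ = u ^ (-α) * L u * u ^ (α + N) := by
            rw [mul_right_comm, ← Real.rpow_add hu0, hexp]
    have ht1 : 1 ≤ u / (u - y) := (one_le_div huy0).2 (by linarith)
    have key2 : ov (u - y) ≤ ov u * (u / (u - y)) ^ (α + N) := by
      rw [Real.div_rpow hu0.le huy0.le, mul_div_assoc',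
        le_div_iff₀ (Real.rpow_pos_of_pos huy0 _)]
      calc ov (u - y) * (u - y) ^ (α + N) ≤ ov u * u ^ (α + N) := key1
        _ = ov u * u ^ (α + N) := rfl
    have key3 : (u / (u - y)) ^ (α + N) ≤ (u / (u - y)) ^ (n : ℕ) := by
      calc (u / (u - y)) ^ (α + N) ≤ (u / (u - y)) ^ ((n : ℕ) : ℝ) :=
            Real.rpow_le_rpow_of_exponent_le ht1 hNn
        _ = (u / (u - y)) ^ (n : ℕ) := Real.rpow_natCast _ n
    have hxA : y / u ≤ 1 / A := by
      rw [div_le_div_iff₀ hu0 hA0]; linarith [hu1]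
    have hx13 : y / u ≤ 1 / 3 := hxA.trans h1A.le
    have hxpos : 0 < y / u := div_pos hy0 hu0
    have h1x : (0:ℝ) < 1 - y / u := by linarith
    have hber : 1 - (n : ℝ) * (y / u) ≤ (1 - y / u) ^ n := by
      have h := one_add_mul_le_pow (a := -(y / u)) (by linarith) n
      calc (1:ℝ) - (n : ℝ) * (y / u) = 1 + (n : ℝ) * (-(y / u)) := by ring
        _ ≤ (1 + -(y / u)) ^ n := h
        _ = (1 - y / u) ^ n := by ring_nf
    have hlow : ((2:ℝ) / 3) ^ n ≤ (1 - y / u) ^ n :=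
      pow_le_pow_left₀ (by norm_num) (by linarith) n
    have heqinv : u / (u - y) = (1 - y / u)⁻¹ := by
      field_simp
    have key4 : (u / (u - y)) ^ (n : ℕ) ≤ 1 + c₃ * (y / u) := by
      rw [heqinv, inv_pow]
      have hPpos : 0 < (1 - y / u) ^ n := pow_pos h1x n
      rw [inv_le_iff_one_le_mul₀ hPpos]
      have hq : ((2:ℝ) / 3) ^ n * ((3:ℝ) / 2) ^ n = 1 := by
        rw [← mul_pow]; norm_num
      have hcnn : 0 ≤ c₃ * (y / u) := by positivity
      have h1 := mul_le_mul_of_nonneg_left hlow hcnn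
      have h2 : c₃ * (y / u) * ((2:ℝ) / 3) ^ n = (n : ℝ) * (y / u) := by
        rw [hc₃]
        calc (n : ℝ) * (3 / 2) ^ n * (y / u) * ((2:ℝ) / 3) ^ n
            = (n : ℝ) * (y / u) * (((2:ℝ) / 3) ^ n * ((3:ℝ) / 2) ^ n) := by ring
          _ = (n : ℝ) * (y / u) * 1 := by rw [hq]
          _ = (n : ℝ) * (y / u) := mul_one _
      linarith [h1, h2, hber]
    have hovu : 0 < ov u := hov_pos u hu0
    have : ov (u - y) ≤ ov u * (1 + c₃ * (y / u)) := by
      calc ov (u - y) ≤ ov u * (u / (u - y)) ^ (α + N) := key2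
        _ ≤ ov u * (u / (u - y)) ^ (n : ℕ) :=
            mul_le_mul_of_nonneg_left key3 hovu.le
        _ ≤ ov u * (1 + c₃ * (y / u)) :=
            mul_le_mul_of_nonneg_left key4 hovu.le
    linarith [this, hovu]
  -- Potter doubling bound
  have hdouble : ∀ b, B < b → ov b ≤ 2 ^ n * ov (2 * b) := by
    intro b hBb
    have hb0 : 0 < b := hB.trans hBb
    have h2b0 : (0:ℝ) < 2 * b := by linarith
    have hrel := hxNL (Set.mem_Ioi.2 hBb) (Set.mem_Ioi.2 (by linarith : B < 2 * b))
      (by linarith : b ≤ 2 * b)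
    simp only at hrel
    have hbN := Real.rpow_pos_of_pos hb0 N
    have hLb : L b ≤ (2:ℝ) ^ N * L (2 * b) := by
      rw [Real.mul_rpow (by norm_num) hb0.le] at hrel
      have : b ^ N * L b ≤ b ^ N * ((2:ℝ) ^ N * L (2 * b)) := by
        calc b ^ N * L b ≤ 2 ^ N * b ^ N * L (2 * b) := hrel
          _ = b ^ N * ((2:ℝ) ^ N * L (2 * b)) := by ring
      exact le_of_mul_le_mul_left this hbN
    have hL2b : 0 < L (2 * b) := hLpos _ h2b0
    have hexp2 : (2:ℝ) ^ N ≤ 2 ^ n * 2 ^ (-α) := by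
      rw [← Real.rpow_natCast 2 n, ← Real.rpow_add two_pos]
      exact Real.rpow_le_rpow_of_exponent_le one_le_two (by linarith)
    have e2 : ov (2 * b) = 2 ^ (-α) * b ^ (-α) * L (2 * b) := by
      rw [hov_eq _ h2b0, Real.mul_rpow (by norm_num) hb0.le]
    have hbα := Real.rpow_pos_of_pos hb0 (-α)
    calc ov b = b ^ (-α) * L b := hov_eq b hb0
      _ ≤ b ^ (-α) * ((2:ℝ) ^ N * L (2 * b)) :=
          mul_le_mul_of_nonneg_left hLb hbα.le
      _ ≤ b ^ (-α) * ((2:ℝ) ^ n * 2 ^ (-α) * L (2 * b)) := by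
          have h10 := mul_le_mul_of_nonneg_right hexp2 hL2b.le
          exact mul_le_mul_of_nonneg_left (by linarith [h10]) hbα.le
      _ = 2 ^ n * ov (2 * b) := by rw [e2]; ring
  -- MVT length bound
  have hMVT : ∀ b, y ≤ b → f (2 * b) - f b ≤ K / ov (2 * b) := by
    intro b hyb
    have hb0 : 0 < b := hy0.trans_le hyb
    have h2b0 : (0:ℝ) < 2 * b := by linarith
    obtain ⟨c, hc, hceq⟩ := exists_deriv_eq_slope f (show b < 2 * b by linarith)
      (hf_cont.mono (fun u hu => Set.mem_Ici.2 (le_trans hb0.le hu.1)))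
      (fun u hu => (hf_diff u (hb0.trans hu.1)).differentiableWithinAt)
    have hc0 : 0 < c := hb0.trans hc.1
    have hvc : c * deriv f c * ov c ≤ K := by
      rw [hK]
      exact htfov_anti (Set.mem_Ioi.2 hy0) (Set.mem_Ioi.2 hc0) (hyb.trans hc.1.le)
    have hovc : ov (2 * b) ≤ ov c := hov_anti (Set.mem_Ioi.2 hc0) (Set.mem_Ioi.2 h2b0) hc.2.le
    have hov2b : 0 < ov (2 * b) := hov_pos _ h2b0
    have hdc0 : 0 ≤ deriv f c := (hderiv_pos c hc0).le
    have heq : f (2 * b) - f b = deriv f c * b := by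
      have hb2 : 2 * b - b = b := by ring
      rw [hceq, hb2, div_mul_cancel₀ _ (ne_of_gt hb0)]
    rw [heq, le_div_iff₀ hov2b]
    calc deriv f c * b * ov (2 * b) ≤ deriv f c * c * ov (2 * b) :=
          mul_le_mul_of_nonneg_right (mul_le_mul_of_nonneg_left hc.1.le hdc0) hov2b.le
      _ ≤ deriv f c * c * ov c :=
          mul_le_mul_of_nonneg_left hovc (mul_nonneg hdc0 hc0.le)
      _ = c * deriv f c * ov c := by ring
      _ ≤ K := hvc
  -- block bound
  have hblock : ∀ b, a ≤ b → ∫ σ in (f b)..(f (2 * b)), D2 σ ≤ c₃ * y * 2 ^ n * K / b := by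
    intro b hab
    have hb0 : 0 < b := ha0.trans_le hab
    have hbB : B < b := haB.trans_le hab
    have hfb2 : f b ≤ f (2 * b) :=
      hfmono (Set.mem_Ici.2 hb0.le) (Set.mem_Ici.2 (by linarith)) (by linarith)
    have hfab : f a ≤ f b := hfmono (Set.mem_Ici.2 ha0.le) (Set.mem_Ici.2 hb0.le) hab
    have hbnd : ∀ σ ∈ Icc (f b) (f (2 * b)), D2 σ ≤ c₃ * y * ov b / b := by
      intro σ hσ
      have ht₀σ : t₀ ≤ σ := le_trans (le_trans ht₀fa hfab) hσ.1
      have hgb : b ≤ g σ := hglb b σ hb0.le hσ.1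
      have hgσ0 : 0 < g σ := hb0.trans_le hgb
      have hP := hPotter (g σ) (le_trans (haAy.trans hab) hgb)
        (le_trans (haB1.trans hab) hgb)
      rw [hD2eq σ ht₀σ]
      have hratio : ov (g σ) / g σ ≤ ov b / b :=
        div_le_div₀ (hov_pos b hb0).le
          (hov_anti (Set.mem_Ioi.2 hb0) (Set.mem_Ioi.2 hgσ0) hgb) hb0 hgb
      calc ov (g σ - y) - ov (g σ) ≤ c₃ * (y / g σ) * ov (g σ) := hP
        _ = c₃ * y * (ov (g σ) / g σ) := by ring
        _ ≤ c₃ * y * (ov b / b) :=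
            mul_le_mul_of_nonneg_left hratio (by positivity)
        _ = c₃ * y * ov b / b := by ring
    have hov2b : 0 < ov (2 * b) := hov_pos _ (by linarith)
    have hovb : 0 < ov b := hov_pos _ hb0
    calc ∫ σ in (f b)..(f (2 * b)), D2 σ
        ≤ ∫ _σ in (f b)..(f (2 * b)), (c₃ * y * ov b / b) :=
          intervalIntegral.integral_mono_on hfb2 (hD2int _ _)
            intervalIntegrable_const hbnd
      _ = (f (2 * b) - f b) * (c₃ * y * ov b / b) := by
          rw [intervalIntegral.integral_const, smul_eq_mul]
      _ ≤ (K / ov (2 * b)) * (c₃ * y * ov b / b) :=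
          mul_le_mul_of_nonneg_right (hMVT b (hay.trans hab)) (by positivity)
      _ ≤ c₃ * y * 2 ^ n * K / b := by
          rw [div_mul_div_comm, div_le_div_iff₀ (by positivity) hb0]
          have h2 : 0 ≤ c₃ * y * K := by positivity
          have h3 := mul_le_mul_of_nonneg_left (hdouble b hbB) h2
          have h4 := mul_le_mul_of_nonneg_right h3 hb0.le
          linarith [h4]
  -- dyadic sum
  have hdyadic : ∀ m : ℕ, ∫ σ in (f a)..(f (2 ^ m * a)), D2 σ
      ≤ c₃ * y * 2 ^ n * K / a * (2 - 2 * (1 / 2 : ℝ) ^ m) := by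
    intro m
    induction m with
    | zero => simp
    | succ m ih =>
      have h2m1 : (1:ℝ) ≤ 2 ^ m := one_le_pow₀ one_le_two
      have hamb : a ≤ 2 ^ m * a := le_mul_of_one_le_left ha0.le h2m1
      have he : (2:ℝ) ^ (m + 1) * a = 2 * (2 ^ m * a) := by ring
      have hsplit := intervalIntegral.integral_add_adjacent_intervals
        (hD2int (f a) (f (2 ^ m * a))) (hD2int (f (2 ^ m * a)) (f (2 ^ (m + 1) * a)))
      have hb := hblock (2 ^ m * a) hamb
      rw [← he] at hb
      have hgeq : c₃ * y * 2 ^ n * K / (2 ^ m * a)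
          = c₃ * y * 2 ^ n * K / a * (1 / 2 : ℝ) ^ m := by
        field_simp
        rw [← mul_pow]; norm_num
      rw [hgeq] at hb
      have hfin : (2:ℝ) - 2 * (1 / 2) ^ m + (1 / 2) ^ m = 2 - 2 * (1 / 2) ^ (m + 1) := by
        rw [pow_succ]; ring
      have hEnn : 0 ≤ c₃ * y * 2 ^ n * K / a := by positivity
      calc ∫ σ in (f a)..(f (2 ^ (m + 1) * a)), D2 σ
          = (∫ σ in (f a)..(f (2 ^ m * a)), D2 σ)
            + ∫ σ in (f (2 ^ m * a))..(f (2 ^ (m + 1) * a)), D2 σ := hsplit.symm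
        _ ≤ c₃ * y * 2 ^ n * K / a * (2 - 2 * (1 / 2 : ℝ) ^ m)
            + c₃ * y * 2 ^ n * K / a * (1 / 2 : ℝ) ^ m := add_le_add ih hb
        _ = c₃ * y * 2 ^ n * K / a * (2 - 2 * (1 / 2 : ℝ) ^ (m + 1)) := by
            rw [← hfin]; ring
  
  -- crude bound on [t₀, f a]
  have hcrude : ∫ σ in t₀..(f a), D2 σ ≤ C₂ * K := by
    by_cases hcase : B + 1 + y ≤ A * y
    · have haM : a = max (A * y) (1 + 2 / A) := by
        rw [ha]
        exact max_eq_left (le_trans hcase (le_max_left _ _))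
      have hfa : f a = t₀ := by rw [haM, ← ht₀eq]
      rw [hfa, intervalIntegral.integral_same]
      positivity
    · push_neg at hcase
      have hyy₁ : y ≤ y₁ := by
        rw [hy₁, le_div_iff₀ (by linarith : (0:ℝ) < A - 1)]
        linarith [hcase]
      have hKm₀ : m₀ ≤ K := by
        rw [hm₀, hK]
        exact htfov_anti (Set.mem_Ioi.2 hy0) (Set.mem_Ioi.2 hy₁pos) hyy₁
      have hbnd : ∀ σ ∈ Icc t₀ (f a), D2 σ ≤ ov δ₀ := by
        intro σ _
        have h2 := (hψpos σ).le
        have h1 := hχbound σ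
        simp only [hD2]; linarith
      have hfaM : f a ≤ f Mbar := by
        apply hfmono (Set.mem_Ici.2 ha0.le) (Set.mem_Ici.2 hMbar0)
        rw [ha, hMbar]
        have hAyy : A * y ≤ A * y₁ := mul_le_mul_of_nonneg_left hyy₁ hA0.le
        exact max_le_max (max_le_max hAyy le_rfl) (by linarith)
      calc ∫ σ in t₀..(f a), D2 σ
          ≤ ∫ _σ in t₀..(f a), ov δ₀ :=
            intervalIntegral.integral_mono_on ht₀fa (hD2int _ _)
              intervalIntegrable_const hbnd
        _ = (f a - t₀) * ov δ₀ := by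
            rw [intervalIntegral.integral_const, smul_eq_mul]
        _ ≤ f Mbar * ov δ₀ := by
            have := (hov_pos _ hδ₀pos).le
            have h5 : f a - t₀ ≤ f Mbar := by linarith [ht₀pos]
            exact mul_le_mul_of_nonneg_right h5 this
        _ ≤ C₂ * K := by
            rw [hC₂, div_mul_eq_mul_div, le_div_iff₀ hm₀pos]
            exact mul_le_mul_of_nonneg_left hKm₀
              (mul_nonneg (hfpos _ hMbar0).le (hov_pos _ hδ₀pos).le)
  -- main assembly
  by_cases hint : IntegrableOn (fun s => ov (g (s + h) - y) - ov (g s)) (Set.Ioi t₀) volume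
  · refine le_of_tendsto
      (MeasureTheory.intervalIntegral_tendsto_integral_Ioi t₀ hint tendsto_id) ?_
    filter_upwards [eventually_ge_atTop (f a)] with T hT
    have hTt₀ : t₀ ≤ T := ht₀fa.trans hT
    have hDint : IntervalIntegrable (fun s => ov (g (s + h) - y) - ov (g s)) volume t₀ T := by
      rw [intervalIntegrable_iff_integrableOn_Ioc_of_le hTt₀]
      exact hint.mono_set Set.Ioc_subset_Ioi_self
    have hptwise : ∀ s ∈ Icc t₀ T, ov (g (s + h) - y) - ov (g s) ≤ D2 s := by
      intro s hs
      have hst₀ : t₀ ≤ s := hs.1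
      have hδs := hδle s hst₀
      have hmono2 : g s ≤ g (s + h) := hgmono s (s + h) (hf0t₀.trans hst₀) (by linarith)
      have hovle : ov (g (s + h) - y) ≤ ov (g s - y) :=
        hov_anti (Set.mem_Ioi.2 (by linarith : (0:ℝ) < g s - y))
          (Set.mem_Ioi.2 (by linarith : (0:ℝ) < g (s + h) - y)) (by linarith)
      rw [hD2eq s hst₀]
      linarith
    have step1 : ∫ s in t₀..T, (ov (g (s + h) - y) - ov (g s)) ≤ ∫ s in t₀..T, D2 s :=
      intervalIntegral.integral_mono_on hTt₀ hDint (hD2int _ _) hptwise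
    -- choose m with T ≤ f (2 ^ m * a)
    obtain ⟨x₀, hx₀⟩ := eventually_atTop.1 (tendsto_atTop.1 hf_top T)
    obtain ⟨m, hm⟩ := pow_unbounded_of_one_lt x₀ one_lt_two
    have hma : x₀ ≤ 2 ^ m * a := by
      have h1 : (2:ℝ) ^ m * 1 ≤ 2 ^ m * a :=
        mul_le_mul_of_nonneg_left ha1.le (by positivity)
      rw [mul_one] at h1
      linarith
    have hfT : T ≤ f (2 ^ m * a) := hx₀ _ hma
    have hstep2 := intervalIntegral.integral_add_adjacent_intervals
      (hD2int t₀ (f a)) (hD2int (f a) T)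
    have hstep3 : ∫ σ in (f a)..T, D2 σ ≤ ∫ σ in (f a)..(f (2 ^ m * a)), D2 σ := by
      have hsp := intervalIntegral.integral_add_adjacent_intervals
        (hD2int (f a) T) (hD2int T (f (2 ^ m * a)))
      have hnn : 0 ≤ ∫ σ in T..(f (2 ^ m * a)), D2 σ :=
        intervalIntegral.integral_nonneg hfT (fun u _ => hD2nonneg u)
      linarith
    have hdy := hdyadic m
    have hgeom : c₃ * y * 2 ^ n * K / a * (2 - 2 * (1 / 2 : ℝ) ^ m) ≤ C₁ * K := by
      have hE : 0 ≤ c₃ * y * 2 ^ n * K / a := by positivity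
      have h1 : (2:ℝ) - 2 * (1 / 2 : ℝ) ^ m ≤ 2 := by
        have : (0:ℝ) ≤ (1 / 2 : ℝ) ^ m := by positivity
        linarith
      have h2 : c₃ * y * 2 ^ n * K / a * (2 - 2 * (1 / 2 : ℝ) ^ m)
          ≤ c₃ * y * 2 ^ n * K / a * 2 := mul_le_mul_of_nonneg_left h1 hE
      have h3 : c₃ * y * 2 ^ n * K / a * 2 ≤ C₁ * K := by
        have hya : y / a ≤ 1 / A := by
          rw [div_le_div_iff₀ ha0 hA0]; linarith [haAy]
        have h7 : (0:ℝ) ≤ 2 * (c₃ * 2 ^ n) * K := by positivity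
        calc c₃ * y * 2 ^ n * K / a * 2 = 2 * (c₃ * 2 ^ n) * K * (y / a) := by ring
          _ ≤ 2 * (c₃ * 2 ^ n) * K * (1 / A) := mul_le_mul_of_nonneg_left hya h7
          _ = C₁ * K := by rw [hC₁]; ring
      linarith
    calc ∫ s in t₀..(id T), (ov (g (s + h) - y) - ov (g s))
        ≤ ∫ s in t₀..T, D2 s := step1
      _ = (∫ σ in t₀..(f a), D2 σ) + ∫ σ in (f a)..T, D2 σ := hstep2.symm
      _ ≤ C₂ * K + ∫ σ in (f a)..(f (2 ^ m * a)), D2 σ := add_le_add hcrude hstep3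
      _ ≤ C₂ * K + c₃ * y * 2 ^ n * K / a * (2 - 2 * (1 / 2 : ℝ) ^ m) := by linarith
      _ ≤ C₂ * K + C₁ * K := by linarith
      _ ≤ (C₁ + C₂ + 1) * K := by linarith [hKpos]
  · rw [MeasureTheory.integral_undef hint]
    positivity
end
end

section
/- Assume case (i). Then liminf_{t→∞} ρ(t) ≥ 0, where ρ(t) := P(O_t)/Φ(t) - ov(g(t)). -/
open MeasureTheory ProbabilityTheory Filter Real Set
open scoped ENNReal

noncomputable section

namespace ConstrainedLocalTime

variable {Ω : Type*} [MeasurableSpace Ω]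

lemma pi_Ioi_ne_top (Pi : Measure ℝ)
    (hfin : ∫⁻ x, ENNReal.ofReal (min 1 x) ∂Pi ≠ ⊤) {b : ℝ} (hb : 0 < b) :
    Pi (Set.Ioi b) ≠ ⊤ := by
  intro htop
  have hmin : 0 < min 1 b := lt_min one_pos hb
  have h1 : ENNReal.ofReal (min 1 b) * Pi (Set.Ioi b)
      = ∫⁻ _ in Set.Ioi b, ENNReal.ofReal (min 1 b) ∂Pi := by
    rw [setLIntegral_const]
  have h2 : ∫⁻ x in Set.Ioi b, ENNReal.ofReal (min 1 b) ∂Pi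
      ≤ ∫⁻ x in Set.Ioi b, ENNReal.ofReal (min 1 x) ∂Pi := by
    refine setLIntegral_mono ((measurable_const.min measurable_id).ennreal_ofReal) ?_
    intro x hx
    exact ENNReal.ofReal_le_ofReal (min_le_min le_rfl (le_of_lt hx))
  have h3 : ∫⁻ x in Set.Ioi b, ENNReal.ofReal (min 1 x) ∂Pi
      ≤ ∫⁻ x, ENNReal.ofReal (min 1 x) ∂Pi := setLIntegral_le_lintegral _ _
  have : ENNReal.ofReal (min 1 b) * Pi (Set.Ioi b) ≠ ⊤ :=
    ne_top_of_le_ne_top hfin (h1 ▸ (h2.trans h3))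
  rw [htop, ENNReal.mul_top (ENNReal.ofReal_pos.mpr hmin).ne'] at this
  exact this rfl

lemma pi_Ioi_nonpos (Pi : Measure ℝ) (h0 : Pi (Set.Iic 0) = 0) {y : ℝ} (hy : y ≤ 0) :
    Pi (Set.Ioi y) = Pi (Set.Ioi 0) := by
  refine le_antisymm ?_ (measure_mono (Set.Ioi_subset_Ioi hy))
  have : Set.Ioi y ⊆ Set.Ioc y 0 ∪ Set.Ioi 0 := by
    intro x hx
    rcases le_or_gt x 0 with h | h
    · exact Or.inl ⟨hx, h⟩
    · exact Or.inr h
  calc Pi (Set.Ioi y) ≤ Pi (Set.Ioc y 0 ∪ Set.Ioi 0) := measure_mono this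
    _ ≤ Pi (Set.Ioc y 0) + Pi (Set.Ioi 0) := measure_union_le _ _
    _ ≤ Pi (Set.Iic 0) + Pi (Set.Ioi 0) := by
        gcongr; exact Set.Ioc_subset_Iic_self
    _ = Pi (Set.Ioi 0) := by rw [h0, zero_add]

/-- Lemma `lowerboundforrho`. In case (i),
`liminf_{t→∞} ρ(t) ≥ 0`, where `ρ(t) = P(O_t)/Φ(t) - ov(g(t))`:
for every `ε > 0`, eventually `ρ(t) > -ε`. -/
theorem rho_liminf_nonneg
    {Ω : Type*} [MeasurableSpace Ω] (P : Measure Ω) (X : ℝ → Ω → ℝ) (Pi : Measure ℝ)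
    (f g : ℝ → ℝ) (α : ℝ) (L : ℝ → ℝ) (B N : ℝ)
    (hc : CaseI P X Pi f g α L B N) :
    ∀ ε > (0:ℝ), ∀ᶠ t in atTop,
      -ε < (P (OEv X g t)).toReal / Phi P X g t - tail Pi (g t) := by
  intro ε hε
  obtain ⟨β, hβ, htend⟩ := hc.cond_beta
  have hα0 : 0 < α := hc.alpha_mem.1
  have hβ0 : 0 < β := lt_trans (by positivity) hβ
  have hPhinn : ∀ t, 0 ≤ Phi P X g t := fun t =>
    setIntegral_nonneg measurableSet_Ioc (fun x _ => ENNReal.toReal_nonneg)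
  have h1 : ∀ᶠ t in atTop, t * tail Pi (g t / Real.log t ^ β) < ε :=
    htend.eventually_lt_const hε
  filter_upwards [h1, eventually_ge_atTop (max 1 (Real.exp 1))] with t ht h2
  have ht1 : (1:ℝ) ≤ t := le_trans (le_max_left _ _) h2
  have hlog : (1:ℝ) ≤ Real.log t := by
    have := Real.log_le_log (Real.exp_pos 1) (le_trans (le_max_right _ _) h2)
    rwa [Real.log_exp] at this
  have hc1 : (1:ℝ) ≤ Real.log t ^ β :=
    Real.one_le_rpow hlog hβ0.le
  have hc0 : (0:ℝ) < Real.log t ^ β := lt_of_lt_of_le one_pos hc1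
  -- tail monotonicity step
  have hstep : tail Pi (g t) ≤ tail Pi (g t / Real.log t ^ β) := by
    rcases le_or_gt (g t) 0 with hg | hg
    · have hg' : g t / Real.log t ^ β ≤ 0 := div_nonpos_of_nonpos_of_nonneg hg hc0.le
      unfold tail
      rw [pi_Ioi_nonpos Pi hc.sub.levySupport hg, pi_Ioi_nonpos Pi hc.sub.levySupport hg']
    · have hb : 0 < g t / Real.log t ^ β := div_pos hg hc0
      have hle : g t / Real.log t ^ β ≤ g t := div_le_self hg.le hc1
      exact ENNReal.toReal_mono (pi_Ioi_ne_top Pi hc.sub.levyIntegrable hb)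
        (measure_mono (Set.Ioi_subset_Ioi hle))
  have htail_nn : (0:ℝ) ≤ tail Pi (g t / Real.log t ^ β) := ENNReal.toReal_nonneg
  have hsmall : tail Pi (g t) < ε := by
    have : tail Pi (g t / Real.log t ^ β) ≤ t * tail Pi (g t / Real.log t ^ β) :=
      le_mul_of_one_le_left htail_nn ht1
    linarith
  have hq : (0:ℝ) ≤ (P (OEv X g t)).toReal / Phi P X g t :=
    div_nonneg ENNReal.toReal_nonneg (hPhinn t)
  linarith


end ConstrainedLocalTime
end
end

section
/- Let ov : (0,∞) → [0,∞) be nonincreasing, let f : [0,∞) → (0,∞) be strictly increasing and continuous with f(0) ∈ (0,1) and lim_{t→∞} f(t) = ∞ and inverse g := f⁻¹ extended by 0 below f(0), and let A ≥ 1, h > 0, y > 0. Then for every t ≥ f(Ay): ∫_{f(Ay)}^t (ov(g(s)) - ov(g(s+h) - y)) ds ≤ h · ov(y). -/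
open MeasureTheory Filter Real Set

noncomputable section

/-- from the proof of Lemma `qh`. For nonincreasing `ov ≥ 0`,
`f` strictly increasing continuous with `f(0) ∈ (0,1)`, `f → ∞`, inverse
`g = f⁻¹` extended by `0` below `f(0)`, `A ≥ 1`, `h > 0`, `y > 0`, and every
`t ≥ f(Ay)`: `∫_{f(Ay)}^t (ov(g(s)) - ov(g(s+h)-y)) ds ≤ h ov(y)`. -/
theorem tail_difference_integral_upper_bound
    (ov f g : ℝ → ℝ)
    (hov_anti : AntitoneOn ov (Set.Ioi 0)) (hov_nonneg : ∀ x > (0:ℝ), 0 ≤ ov x)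
    (hf0 : f 0 ∈ Set.Ioo (0:ℝ) 1)
    (hf_mono : StrictMonoOn f (Set.Ici 0)) (hf_cont : ContinuousOn f (Set.Ici 0))
    (hf_top : Tendsto f atTop atTop)
    (hg_inv : ∀ x ≥ (0:ℝ), g (f x) = x) (hf_inv : ∀ y, f 0 ≤ y → f (g y) = y)
    (hg_zero : ∀ x, 0 ≤ x → x < f 0 → g x = 0)
    (A h y : ℝ) (hA : 1 ≤ A) (hh : 0 < h) (hy : 0 < y) :
    ∀ t, f (A * y) ≤ t →
      ∫ s in Set.Ioc (f (A * y)) t, (ov (g s) - ov (g (s + h) - y)) ≤ h * ov y := by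
  intro t ht
  set a := f (A * y) with ha
  have hAy : 0 < A * y := lt_of_lt_of_le hy (le_mul_of_one_le_left hy.le hA)
  have hga : g a = A * y := hg_inv _ hAy.le
  have hf0a : f 0 ≤ a := (hf_mono.monotoneOn) (Set.mem_Ici.mpr (le_refl (0:ℝ))) hAy.le hAy.le
  -- surjectivity onto [f 0, ∞)
  have hsurj : ∀ u, f 0 ≤ u → ∃ x, 0 ≤ x ∧ f x = u := by
    intro u hu
    obtain ⟨b, hb1, hb2⟩ := ((hf_top.eventually_ge_atTop u).and (eventually_ge_atTop (0:ℝ))).exists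
    have := intermediate_value_Icc hb2 (hf_cont.mono (Icc_subset_Ici_self))
    obtain ⟨x, hx, hfx⟩ := this ⟨hu, hb1⟩
    exact ⟨x, hx.1, hfx⟩
  have hg_nonneg : ∀ u, f 0 ≤ u → 0 ≤ g u := by
    intro u hu
    obtain ⟨x, hx0, rfl⟩ := hsurj u hu
    rw [hg_inv x hx0]; exact hx0
  have hg_mono : ∀ u v, f 0 ≤ u → u ≤ v → g u ≤ g v := by
    intro u v hu huv
    by_contra hlt
    push_neg at hlt
    have : f (g v) < f (g u) :=
      hf_mono (hg_nonneg v (hu.trans huv)) (hg_nonneg u hu) hlt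
    rw [hf_inv u hu, hf_inv v (hu.trans huv)] at this
    exact absurd huv (not_le.mpr this)
  have hg_strict : ∀ u v, f 0 ≤ u → u < v → g u < g v := by
    intro u v hu huv
    rcases lt_or_ge (g u) (g v) with h' | h'
    · exact h'
    · exfalso
      have : f (g v) ≤ f (g u) := by
        rcases eq_or_lt_of_le h' with he | hl
        · rw [he]
        · exact (hf_mono (hg_nonneg v (hu.trans huv.le)) (hg_nonneg u hu) hl).le
      rw [hf_inv u hu, hf_inv v (hu.trans huv.le)] at this
      exact absurd this (not_le.mpr huv)
  -- key positivity facts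
  have hgs_pos : ∀ s, a ≤ s → A * y ≤ g s := by
    intro s hs; rw [← hga]; exact hg_mono a s hf0a hs
  have hgsh_pos : ∀ s, a ≤ s → 0 < g (s + h) - y := by
    intro s hs
    have h1 : A * y < g (s + h) := by
      rw [← hga]; exact hg_strict a (s + h) hf0a (by linarith)
    have : y ≤ A * y := le_mul_of_one_le_left hy.le hA
    linarith
  have hy_le : y ≤ A * y := le_mul_of_one_le_left hy.le hA
  set F := fun s => ov (g s) with hF
  have hF_anti : AntitoneOn F (Ici a) := by
    intro u hu v hv huv
    exact hov_anti (lt_of_lt_of_le hAy (hgs_pos u hu)) (lt_of_lt_of_le hAy (hgs_pos v hv))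
      (hg_mono u v (hf0a.trans hu) huv)
  have hF_nonneg : ∀ s, a ≤ s → 0 ≤ F s := fun s hs =>
    hov_nonneg _ (lt_of_lt_of_le hAy (hgs_pos s hs))
  -- the shifted+shifted-down function
  set G := fun s => ov (g (s + h) - y) with hG
  have hG_anti : AntitoneOn G (Ici a) := by
    intro u hu v hv huv
    have hm := hg_mono (u + h) (v + h) (by simp only [mem_Ici] at hu; linarith) (by linarith)
    exact hov_anti (hgsh_pos u hu) (hgsh_pos v hv) (by linarith)
  -- integrabilities
  have hIntF : ∀ b c, a ≤ b → b ≤ c → IntervalIntegrable F volume b c := by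
    intro b c hb hbc
    exact (hF_anti.mono (fun x hx => le_trans hb (by rw [uIcc_of_le hbc] at hx; exact hx.1))).intervalIntegrable
  have hIntG : IntervalIntegrable G volume a t := by
    exact (hG_anti.mono (fun x hx => by rw [uIcc_of_le ht] at hx; exact hx.1)).intervalIntegrable
  have hIntFh : IntervalIntegrable (fun s => F (s + h)) volume a t := by
    have := (hIntF (a + h) (t + h) (by linarith) (by linarith)).comp_add_right h
    simpa using this
  -- pointwise : G ≥ F(·+h)
  have hpt : ∀ s ∈ Icc a t, F (s + h) ≤ G s := by
    intro s hs
    have h1 : 0 < g (s + h) - y := hgsh_pos s hs.1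
    have h2 : g (s + h) - y ≤ g (s + h) := by linarith
    exact hov_anti (Set.mem_Ioi.mpr h1) (Set.mem_Ioi.mpr (by linarith)) h2
  -- convert set integral to interval integral
  rw [show ∫ s in Set.Ioc a t, (ov (g s) - ov (g (s + h) - y)) = ∫ s in a..t, (F s - G s) from
    (intervalIntegral.integral_of_le ht).symm]
  rw [intervalIntegral.integral_sub (hIntF a t le_rfl ht) hIntG]
  have step1 : ∫ s in a..t, F (s + h) ≤ ∫ s in a..t, G s :=
    intervalIntegral.integral_mono_on ht hIntFh hIntG hpt
  have step2 : (∫ s in a..t, F (s + h)) = ∫ s in (a+h)..(t+h), F s :=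
    intervalIntegral.integral_comp_add_right F h
  have hsplit1 : (∫ s in a..(t+h), F s) = (∫ s in a..t, F s) + ∫ s in t..(t+h), F s :=
    (intervalIntegral.integral_add_adjacent_intervals (hIntF a t le_rfl ht)
      (hIntF t (t+h) ht (by linarith))).symm
  have hsplit2 : (∫ s in a..(t+h), F s) = (∫ s in a..(a+h), F s) + ∫ s in (a+h)..(t+h), F s :=
    (intervalIntegral.integral_add_adjacent_intervals (hIntF a (a+h) le_rfl (by linarith))
      (hIntF (a+h) (t+h) (by linarith) (by linarith))).symm
  have hnn : 0 ≤ ∫ s in t..(t+h), F s :=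
    intervalIntegral.integral_nonneg (by linarith) (fun u hu => hF_nonneg u (ht.trans hu.1))
  have hbound : (∫ s in a..(a+h), F s) ≤ h * ov (A * y) := by
    have : (∫ s in a..(a+h), F s) ≤ ∫ _ in a..(a+h), ov (A * y) := by
      apply intervalIntegral.integral_mono_on (by linarith)
        (hIntF a (a+h) le_rfl (by linarith)) intervalIntegrable_const
      intro s hs
      have := hgs_pos s hs.1
      exact hov_anti hAy (lt_of_lt_of_le hAy this) this
    simpa [mul_comm] using this
  have hfin : ov (A * y) ≤ ov y := hov_anti hy hAy hy_le
  have : (∫ s in a..t, F s) - ∫ s in a..t, F (s + h) ≤ h * ov y := by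
    rw [step2]
    have e : (∫ s in (a+h)..(t+h), F s) = (∫ s in a..t, F s) + (∫ s in t..(t+h), F s) - ∫ s in a..(a+h), F s := by
      rw [← hsplit1, hsplit2]; ring
    rw [e]
    have : h * ov (A * y) ≤ h * ov y := by nlinarith
    linarith
  linarith
end
end
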